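/- arXiv:2605.24879 — 5 statements merged into one kernel-verified Lean document; each statement's English description precedes it below -/
import Mathlib

section
/- Let Z_1, ..., Z_d be i.i.d. real-valued integrable random variables and φ : ℝ → ℝ convex with E|φ(∑ a_i Z_i)| < ∞ for all relevant a. Then the map Q(a) = E[φ(∑_{i=1}^d a_i Z_i)] is Schur-convex on ℝ^d. -/
open MeasureTheory ProbabilityTheory Finset

/-- `x` majorizes `y`. -/
def Majorizes {d : ℕ} (x y : Fin d → ℝ) : Prop :=
  (∀ s : Finset (Fin d), ∃ t : Finset (Fin d), t.card = s.card ∧ ∑ i ∈ s, y i ≤ ∑ i ∈ t, x i)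
  ∧ ∑ i, x i = ∑ i, y i

/-- Abel-type comparison with nonnegative decreasing weights. -/
lemma abelA (w v : ℕ → ℝ) : ∀ (d : ℕ) (u : ℕ → ℝ),
    (∀ j k, j ≤ k → k < d → u k ≤ u j) → (∀ k, k < d → 0 ≤ u k) →
    (∀ k, k ≤ d → ∑ j ∈ range k, w j ≤ ∑ j ∈ range k, v j) →
    ∑ j ∈ range d, u j * w j ≤ ∑ j ∈ range d, u j * v j := by
  intro d
  induction d with
  | zero => intro u _ _ _; simp
  | succ d ih =>
    intro u hmono hpos hT
    have key : ∀ f : ℕ → ℝ, ∑ j ∈ range (d+1), u j * f j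
        = (∑ j ∈ range d, (u j - u d) * f j) + u d * ∑ j ∈ range (d+1), f j := by
      intro f
      rw [Finset.sum_range_succ, Finset.mul_sum, Finset.sum_range_succ]
      simp only [sub_mul, Finset.sum_sub_distrib]
      ring
    have h1 := ih (fun j => u j - u d)
      (fun j k hjk hk => by have := hmono j k hjk (Nat.lt_succ_of_lt hk); simp; linarith)
      (fun k hk => by
        have := hmono k d (Nat.le_of_lt hk) (Nat.lt_succ_self d); simp; linarith)
      (fun k hk => hT k (Nat.le_succ_of_le hk))
    have h2 : 0 ≤ u d := hpos d (Nat.lt_succ_self d)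
    have h3 := hT (d+1) le_rfl
    have h4 := mul_le_mul_of_nonneg_left h3 h2
    rw [key w, key v]
    linarith

/-- Abel-type comparison with decreasing weights, equal totals. -/
lemma abelB (d : ℕ) (u w v : ℕ → ℝ)
    (hmono : ∀ j k, j ≤ k → k < d → u k ≤ u j)
    (hT : ∀ k, k ≤ d → ∑ j ∈ range k, w j ≤ ∑ j ∈ range k, v j)
    (h0 : ∑ j ∈ range d, w j = ∑ j ∈ range d, v j) :
    ∑ j ∈ range d, u j * w j ≤ ∑ j ∈ range d, u j * v j := by
  rcases Nat.eq_zero_or_pos d with rfl | hd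
  · simp
  have h1 := abelA w v d (fun j => u j - u (d-1))
    (fun j k hjk hk => by have := hmono j k hjk hk; simp; linarith)
    (fun k hk => by
      have := hmono k (d-1) (by omega) (by omega); simp; linarith)
    hT
  have key : ∀ f : ℕ → ℝ, ∑ j ∈ range d, u j * f j
      = (∑ j ∈ range d, (u j - u (d-1)) * f j) + u (d-1) * ∑ j ∈ range d, f j := by
    intro f
    rw [Finset.mul_sum]
    simp only [sub_mul, Finset.sum_sub_distrib]
    ring
  rw [key w, key v, h0]
  linarith

/-- A sum over a subset is at most the sum of the largest values, for decreasing `v`. -/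
lemma subset_sum_le (d : ℕ) (v : ℕ → ℝ) (hv : ∀ j k, j ≤ k → k < d → v k ≤ v j)
    (s : Finset ℕ) (hs : ∀ m ∈ s, m < d) :
    ∑ j ∈ s, v j ≤ ∑ j ∈ range s.card, v j := by
  classical
  set m := s.card with hm
  let e : Fin m ↪o ℕ := s.orderEmbOfFin hm.symm
  have hmem : ∀ k : Fin m, (e k : ℕ) ∈ s := fun k => Finset.orderEmbOfFin_mem s hm.symm k
  have hle : ∀ i (h : i < m), i ≤ e ⟨i, h⟩ := by
    intro i
    induction i with
    | zero => intro h; exact Nat.zero_le _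
    | succ n ihn =>
      intro h
      have h' : n < m := by omega
      have hlt : e ⟨n, h'⟩ < e ⟨n+1, h⟩ := e.strictMono (by simp [Fin.lt_def])
      have := ihn h'
      omega
  have hseq : s = Finset.univ.image (fun k : Fin m => (e k : ℕ)) := by
    apply Finset.coe_injective
    rw [Finset.coe_image, Finset.coe_univ, Set.image_univ]
    exact (Finset.range_orderEmbOfFin s hm.symm).symm
  rw [hseq, Finset.sum_image (fun i _ j _ h => e.injective h)]
  calc ∑ x : Fin m, v (e x) ≤ ∑ x : Fin m, v x.val := by
        apply Finset.sum_le_sum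
        intro k _
        exact hv k (e k) (hle k.1 k.2) (hs _ (hmem k))
    _ = ∑ j ∈ range m, v j := Fin.sum_univ_eq_sum_range (fun j => v j) m

lemma key_perm {d : ℕ} (a b : Fin d → ℝ) (hab : Majorizes a b) (c : Fin d → ℝ) :
    ∃ σ : Equiv.Perm (Fin d), ∑ i, c i * b i ≤ ∑ i, c i * a (σ i) := by
  classical
  set τ := Tuple.sort (fun i => -c i) with hτ
  set π := Tuple.sort (fun i => -a i) with hπ
  have hcmono : Monotone ((fun i => -c i) ∘ τ) := Tuple.monotone_sort _
  have hamono : Monotone ((fun i => -a i) ∘ π) := Tuple.monotone_sort _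
  set U : ℕ → ℝ := fun k => if h : k < d then c (τ ⟨k, h⟩) else 0 with hU
  set W : ℕ → ℝ := fun k => if h : k < d then b (τ ⟨k, h⟩) else 0 with hW
  set V : ℕ → ℝ := fun k => if h : k < d then a (π ⟨k, h⟩) else 0 with hV
  have hUmono : ∀ j k, j ≤ k → k < d → U k ≤ U j := by
    intro j k hjk hk
    have hj : j < d := lt_of_le_of_lt hjk hk
    simp only [hU, dif_pos hj, dif_pos hk]
    have := hcmono (show (⟨j, hj⟩ : Fin d) ≤ ⟨k, hk⟩ from hjk)
    simp only [Function.comp_apply] at this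
    linarith
  have hVanti : ∀ j k, j ≤ k → k < d → V k ≤ V j := by
    intro j k hjk hk
    have hj : j < d := lt_of_le_of_lt hjk hk
    simp only [hV, dif_pos hj, dif_pos hk]
    have := hamono (show (⟨j, hj⟩ : Fin d) ≤ ⟨k, hk⟩ from hjk)
    simp only [Function.comp_apply] at this
    linarith
  have hWsum : ∀ k (hk : k ≤ d), ∑ j ∈ range k, W j
      = ∑ i ∈ Finset.univ.image (fun j : Fin k => τ (Fin.castLE hk j)), b i := by
    intro k hk
    rw [Finset.sum_image (fun x _ y _ h => Fin.castLE_injective hk (τ.injective h))]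
    rw [← Fin.sum_univ_eq_sum_range (fun j => W j) k]
    apply Finset.sum_congr rfl
    intro j _
    simp only [hW]
    rw [dif_pos (lt_of_lt_of_le j.2 hk)]
    rfl
  have hT : ∀ k, k ≤ d → ∑ j ∈ range k, W j ≤ ∑ j ∈ range k, V j := by
    intro k hk
    set s := Finset.univ.image (fun j : Fin k => τ (Fin.castLE hk j)) with hsdef
    have hinj : Function.Injective fun j : Fin k => τ (Fin.castLE hk j) :=
      fun x y h => Fin.castLE_injective hk (τ.injective h)
    have hcard : s.card = k := by
      rw [hsdef, Finset.card_image_of_injective _ hinj, Finset.card_univ, Fintype.card_fin]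
    obtain ⟨t, htc, hts⟩ := hab.1 s
    have htc' : t.card = k := by rw [htc, hcard]
    set t' : Finset ℕ := (t.image (fun i => π.symm i)).image Fin.val with ht'def
    have ht'card : t'.card = k := by
      rw [ht'def, Finset.card_image_of_injective _ Fin.val_injective,
        Finset.card_image_of_injective _ π.symm.injective, htc']
    have ht'lt : ∀ m ∈ t', m < d := by
      intro m hm
      rw [ht'def] at hm
      simp only [Finset.mem_image] at hm
      obtain ⟨i, _, rfl⟩ := hm
      exact i.2
    have hsum_t' : ∑ j ∈ t', V j = ∑ i ∈ t, a i := by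
      rw [ht'def, Finset.sum_image (fun x _ y _ h => Fin.val_injective h),
        Finset.sum_image (fun x _ y _ h => π.symm.injective h)]
      apply Finset.sum_congr rfl
      intro i _
      simp only [hV]
      rw [dif_pos (π.symm i).2]
      congr 1
      simp
    calc ∑ j ∈ range k, W j = ∑ i ∈ s, b i := hWsum k hk
      _ ≤ ∑ i ∈ t, a i := hts
      _ = ∑ j ∈ t', V j := hsum_t'.symm
      _ ≤ ∑ j ∈ range t'.card, V j := subset_sum_le d V hVanti t' ht'lt
      _ = ∑ j ∈ range k, V j := by rw [ht'card]
  have h0 : ∑ j ∈ range d, W j = ∑ j ∈ range d, V j := by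
    rw [← Fin.sum_univ_eq_sum_range (fun j => W j) d, ← Fin.sum_univ_eq_sum_range (fun j => V j) d]
    have e1 : ∑ i : Fin d, W i.val = ∑ i, b (τ i) := by
      apply Finset.sum_congr rfl; intro i _; simp only [hW]; rw [dif_pos i.2]
    have e2 : ∑ i : Fin d, V i.val = ∑ i, a (π i) := by
      apply Finset.sum_congr rfl; intro i _; simp only [hV]; rw [dif_pos i.2]
    rw [e1, e2, Equiv.sum_comp τ b, Equiv.sum_comp π a]
    exact hab.2.symm
  have main := abelB d U W V hUmono hT h0
  have lhs : ∑ j ∈ range d, U j * W j = ∑ i, c i * b i := by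
    rw [← Fin.sum_univ_eq_sum_range (fun j => U j * W j) d]
    have e1 : ∑ i : Fin d, U i.val * W i.val = ∑ i, c (τ i) * b (τ i) := by
      apply Finset.sum_congr rfl; intro i _; simp only [hU, hW]; rw [dif_pos i.2, dif_pos i.2]
    rw [e1]
    exact Equiv.sum_comp τ (fun i => c i * b i)
  have rhs : ∑ j ∈ range d, U j * V j = ∑ i, c i * a (π (τ.symm i)) := by
    rw [← Fin.sum_univ_eq_sum_range (fun j => U j * V j) d]
    have e1 : ∑ i : Fin d, U i.val * V i.val
        = ∑ i, (fun i => c i * a (π (τ.symm i))) (τ i) := by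
      apply Finset.sum_congr rfl
      intro i _
      simp only [hU, hV]
      rw [dif_pos i.2, dif_pos i.2]
      simp
    rw [e1]
    exact Equiv.sum_comp τ (fun i => c i * a (π (τ.symm i)))
  refine ⟨τ.symm.trans π, ?_⟩
  rw [← lhs]
  simpa only [Equiv.trans_apply, rhs] using main

lemma rado {d : ℕ} (a b : Fin d → ℝ) (hab : Majorizes a b) :
    b ∈ convexHull ℝ (Set.range fun σ : Equiv.Perm (Fin d) => a ∘ σ) := by
  classical
  by_contra hb
  have hS : (Set.range fun σ : Equiv.Perm (Fin d) => a ∘ σ).Finite := Set.finite_range _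
  have hclosed : IsClosed (convexHull ℝ (Set.range fun σ : Equiv.Perm (Fin d) => a ∘ σ)) :=
    (hS.isCompact_convexHull ℝ).isClosed
  obtain ⟨f, u, hfu, hub⟩ :=
    geometric_hahn_banach_closed_point (convex_convexHull ℝ _) hclosed hb
  set c : Fin d → ℝ := fun i => f (fun j => if i = j then (1 : ℝ) else 0) with hc
  have hf : ∀ x : Fin d → ℝ, f x = ∑ i, c i * x i := by
    intro x
    conv_lhs => rw [pi_eq_sum_univ x]
    rw [map_sum]
    apply Finset.sum_congr rfl
    intro i _
    rw [_root_.map_smul]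
    simp [hc, mul_comm]
  obtain ⟨σ, hσ⟩ := key_perm a b hab c
  have h1 : f (a ∘ σ) < u := hfu _ (subset_convexHull ℝ _ ⟨σ, rfl⟩)
  have h2 : f b ≤ f (a ∘ σ) := by
    rw [hf, hf]
    simpa [Function.comp] using hσ
  linarith

open MeasureTheory ProbabilityTheory in
lemma exch {Ω : Type*} [MeasurableSpace Ω]
    (μ : Measure Ω) [IsProbabilityMeasure μ] {d : ℕ} (Z : Fin d → Ω → ℝ)
    (hmeas : ∀ i, Measurable (Z i))
    (hindep : iIndepFun Z μ)
    (hident : ∀ i j, IdentDistrib (Z i) (Z j) μ μ)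
    (φ : ℝ → ℝ) (hφc : Continuous φ) (a : Fin d → ℝ) (σ : Equiv.Perm (Fin d)) :
    ∫ ω, φ (∑ i, a (σ i) * Z i ω) ∂μ = ∫ ω, φ (∑ i, a i * Z i ω) ∂μ := by
  classical
  haveI : ∀ i, IsProbabilityMeasure ((μ.map (Z i))) :=
    fun i => Measure.isProbabilityMeasure_map (hmeas i).aemeasurable
  set W : Ω → (Fin d → ℝ) := fun ω i => Z i ω with hWdef
  have hW : Measurable W := measurable_pi_lambda _ hmeas
  have hmap : μ.map W = Measure.pi (fun i => μ.map (Z i)) := by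
    symm
    apply Measure.pi_eq
    intro s hs
    rw [Measure.map_apply hW (MeasurableSet.univ_pi hs)]
    have hpre : W ⁻¹' Set.pi Set.univ s = ⋂ i ∈ Finset.univ, Z i ⁻¹' s i := by
      ext ω; simp [hWdef, Set.mem_pi]
    rw [hpre, hindep.measure_inter_preimage_eq_mul Finset.univ (fun i _ => hs i)]
    exact Finset.prod_congr rfl fun i _ => (Measure.map_apply (hmeas i) (hs i)).symm
  have key : ∀ c : Fin d → ℝ, ∫ ω, φ (∑ i, c i * Z i ω) ∂μ
      = ∫ x, φ (∑ i, c i * x i) ∂(Measure.pi fun i => μ.map (Z i)) := by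
    intro c
    rw [← hmap, integral_map hW.aemeasurable]
    exact (hφc.comp (continuous_finset_sum _ fun i _ =>
      (continuous_const.mul (continuous_apply i)))).aestronglyMeasurable
  rw [key, key]
  have hmarg : (fun i => μ.map (Z (σ i))) = fun i => μ.map (Z i) := by
    funext i
    exact (hident (σ i) i).map_eq
  have hmp : MeasurePreserving (MeasurableEquiv.piCongrLeft (fun _ : Fin d => ℝ) σ)
      (Measure.pi fun i => μ.map (Z i)) (Measure.pi fun i => μ.map (Z i)) := by
    have h := MeasureTheory.measurePreserving_piCongrLeft (fun i => μ.map (Z i)) σ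
    rwa [hmarg] at h
  rw [← hmp.integral_comp (MeasurableEquiv.measurableEmbedding _) (fun x => φ (∑ i, a i * x i))]
  congr 1
  funext x
  congr 1
  rw [← Equiv.sum_comp σ (fun i => a i * (MeasurableEquiv.piCongrLeft (fun _ : Fin d => ℝ) σ) x i)]
  apply Finset.sum_congr rfl
  intro i _
  congr 1
  exact (MeasurableEquiv.piCongrLeft_apply_apply (β := fun _ : Fin d => ℝ) σ x i).symm

/-- For i.i.d. integrable real random variables `Z_1, ..., Z_d` and a convex `φ : ℝ → ℝ`
with `E|φ(∑ a_i Z_i)| < ∞` for all `a`, the map `a ↦ E[φ(∑ a_i Z_i)]` is Schur-convex. -/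
theorem schur_convex_expectation_convex_of_iid {Ω : Type*} [MeasurableSpace Ω]
    (μ : Measure Ω) [IsProbabilityMeasure μ] {d : ℕ} (Z : Fin d → Ω → ℝ)
    (hmeas : ∀ i, Measurable (Z i))
    (hindep : iIndepFun Z μ)
    (hident : ∀ i j, IdentDistrib (Z i) (Z j) μ μ)
    (hint : ∀ i, Integrable (Z i) μ)
    (φ : ℝ → ℝ) (hφ : ConvexOn ℝ Set.univ φ)
    (hφint : ∀ a : Fin d → ℝ, Integrable (fun ω => φ (∑ i, a i * Z i ω)) μ)
    (a b : Fin d → ℝ) (hab : Majorizes a b) :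
    ∫ ω, φ (∑ i, b i * Z i ω) ∂μ ≤ ∫ ω, φ (∑ i, a i * Z i ω) ∂μ := by
  classical
  have hφc : Continuous φ := continuousOn_univ.mp (hφ.continuousOn isOpen_univ)
  have hrado := rado a b hab
  set T : Finset (Fin d → ℝ) := Finset.univ.image (fun σ : Equiv.Perm (Fin d) => a ∘ σ) with hT
  have hrange : (Set.range fun σ : Equiv.Perm (Fin d) => a ∘ σ) = ↑T := by
    rw [hT, Finset.coe_image, Finset.coe_univ, Set.image_univ]
  rw [hrange] at hrado
  obtain ⟨w, hw0, hw1, hwx⟩ := Finset.mem_convexHull'.mp hrado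
  have hbi : ∀ i, b i = ∑ y ∈ T, w y * y i := by
    intro i
    rw [← hwx]
    simp [Finset.sum_apply]
  have hsum : ∀ ω, ∑ i, b i * Z i ω = ∑ y ∈ T, w y * ∑ i, y i * Z i ω := by
    intro ω
    calc ∑ i, b i * Z i ω = ∑ i, ∑ y ∈ T, w y * y i * Z i ω := by
          apply Finset.sum_congr rfl
          intro i _
          rw [hbi i, Finset.sum_mul]
      _ = ∑ y ∈ T, ∑ i, w y * y i * Z i ω := Finset.sum_comm
      _ = ∑ y ∈ T, w y * ∑ i, y i * Z i ω := by
          apply Finset.sum_congr rfl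
          intro y _
          rw [Finset.mul_sum]
          apply Finset.sum_congr rfl
          intro i _
          ring
  have hjensen : ∀ ω, φ (∑ i, b i * Z i ω) ≤ ∑ y ∈ T, w y * φ (∑ i, y i * Z i ω) := by
    intro ω
    have h := hφ.map_sum_le (t := T) (w := w) (p := fun y => ∑ i, y i * Z i ω)
      hw0 hw1 (fun _ _ => Set.mem_univ _)
    rw [hsum ω]
    simpa [smul_eq_mul] using h
  have hint1 : Integrable (fun ω => ∑ y ∈ T, w y * φ (∑ i, y i * Z i ω)) μ :=
    integrable_finset_sum _ (fun y _ => (hφint y).const_mul (w y))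
  calc ∫ ω, φ (∑ i, b i * Z i ω) ∂μ
      ≤ ∫ ω, ∑ y ∈ T, w y * φ (∑ i, y i * Z i ω) ∂μ :=
        integral_mono (hφint b) hint1 hjensen
    _ = ∑ y ∈ T, w y * ∫ ω, φ (∑ i, y i * Z i ω) ∂μ := by
        rw [integral_finset_sum _ (fun y _ => (hφint y).const_mul (w y))]
        exact Finset.sum_congr rfl fun y _ => integral_const_mul _ _
    _ = ∑ y ∈ T, w y * ∫ ω, φ (∑ i, a i * Z i ω) ∂μ := by
        apply Finset.sum_congr rfl
        intro y hy
        obtain ⟨σ, _, rfl⟩ := Finset.mem_image.mp hy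
        congr 1
        exact exch μ Z hmeas hindep hident φ hφc a σ
    _ = ∫ ω, φ (∑ i, a i * Z i ω) ∂μ := by
        rw [← Finset.sum_mul, hw1, one_mul]
end

section
/- Let X_1, ..., X_d be i.i.d. random variables distributed as (1/k)·χ²(k). For λ, μ in the probability simplex Δ^{d-1} with λ majorizing μ, the weighted sum X(μ) = ∑ μ_i X_i is dominated in the convex order by X(λ) = ∑ λ_i X_i. In particular, with e = (1,0,...,0) and u = (1/d,...,1/d): X(u) ⪯_cvx X(λ) ⪯_cvx X(e) for every λ in the simplex. -/
open MeasureTheory ProbabilityTheory Finset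

/-- `X ⪯_cvx Y`: `E[φ(X)] ≤ E[φ(Y)]` for every convex `φ` for which both expectations exist. -/
def ConvexOrder {Ω : Type*} [MeasurableSpace Ω] (μ : Measure Ω) (X Y : Ω → ℝ) : Prop :=
  ∀ φ : ℝ → ℝ, ConvexOn ℝ Set.univ φ →
    Integrable (fun ω => φ (X ω)) μ → Integrable (fun ω => φ (Y ω)) μ →
    ∫ ω, φ (X ω) ∂μ ≤ ∫ ω, φ (Y ω) ∂μ

section Combinatorics

lemma strictMono_le_apply' {k d : ℕ} {f : Fin k → Fin d} (hf : StrictMono f)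
    (i : Fin k) : (i : ℕ) ≤ (f i : ℕ) := by
  obtain ⟨n, hn⟩ := i
  induction n with
  | zero => exact Nat.zero_le _
  | succ m ih =>
    have hm : m < k := Nat.lt_of_succ_lt hn
    have h1 : f ⟨m, hm⟩ < f ⟨m + 1, hn⟩ := hf (by simp [Fin.lt_def])
    have h2 := ih hm
    have h3 := Fin.lt_def.mp h1
    simp only [Fin.val_mk] at h2 h3 ⊢
    omega

lemma sum_le_sum_initial {d : ℕ} {g : Fin d → ℝ} (hg : Antitone g) (t : Finset (Fin d)) :
    ∑ i ∈ t, g i ≤ ∑ i ∈ univ.filter (fun i : Fin d => (i : ℕ) < t.card), g i := by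
  classical
  set m := t.card with hm
  have hmd : m ≤ d := by simpa using t.card_le_univ
  have himg : t = Finset.image (fun k => t.orderEmbOfFin hm.symm k) univ := by
    apply Finset.coe_injective
    push_cast
    rw [Set.image_univ, Finset.range_orderEmbOfFin]
  have himg2 : univ.filter (fun i : Fin d => (i : ℕ) < m)
      = Finset.image (fun k : Fin m => (⟨k, lt_of_lt_of_le k.isLt hmd⟩ : Fin d)) univ := by
    ext i
    simp only [Finset.mem_image, Finset.mem_filter, Finset.mem_univ, true_and]
    constructor
    · rintro hi
      exact ⟨⟨i, hi⟩, rfl⟩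
    · rintro ⟨k, -, rfl⟩
      exact k.isLt
  have hinj1 : ∀ a ∈ univ, ∀ b ∈ univ, (fun k : Fin m => (⟨k, lt_of_lt_of_le k.isLt hmd⟩ : Fin d)) a
      = (fun k : Fin m => (⟨k, lt_of_lt_of_le k.isLt hmd⟩ : Fin d)) b → a = b := by
    intro a _ b _ hab
    simpa [Fin.ext_iff] using congrArg Fin.val hab
  have hinj2 : ∀ a ∈ univ, ∀ b ∈ univ, (fun k => t.orderEmbOfFin hm.symm k) a
      = (fun k => t.orderEmbOfFin hm.symm k) b → a = b := fun a _ b _ hab =>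
    (t.orderEmbOfFin hm.symm).injective hab
  rw [himg2, Finset.sum_image hinj1]
  conv_lhs => rw [himg, Finset.sum_image hinj2]
  apply Finset.sum_le_sum
  intro k _
  apply hg
  rw [Fin.le_def]
  exact strictMono_le_apply' (t.orderEmbOfFin hm.symm).strictMono k

lemma abel_bound (a δ : ℕ → ℝ) (ha : ∀ i j, i ≤ j → a j ≤ a i) :
    ∀ n : ℕ, (∀ j ≤ n, 0 ≤ ∑ i ∈ range j, δ i) →
      a n * (∑ i ∈ range n, δ i) ≤ ∑ i ∈ range n, a i * δ i := by
  intro n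
  induction n with
  | zero => simp
  | succ m ih =>
    intro h
    have h1 := ih (fun j hj => h j (hj.trans (Nat.le_succ m)))
    rw [Finset.sum_range_succ, Finset.sum_range_succ]
    have h2 : a (m + 1) * (∑ i ∈ range m, δ i + δ m)
        ≤ a m * (∑ i ∈ range m, δ i + δ m) := by
      apply mul_le_mul_of_nonneg_right (ha m (m+1) (Nat.le_succ m))
      simpa [Finset.sum_range_succ] using h (m+1) le_rfl
    nlinarith [h1, h2]

lemma sum_range_eq_sum_filter {d : ℕ} (f : Fin d → ℝ) (j : ℕ) :
    ∑ i ∈ range j, (if h : i < d then f ⟨i, h⟩ else 0)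
      = ∑ i ∈ univ.filter (fun i : Fin d => (i : ℕ) < j), f i := by
  rw [← Finset.sum_filter_of_ne (f := fun i : ℕ => if h : i < d then f ⟨i, h⟩ else 0)
    (p := fun i => i < d) ?_]
  · apply Finset.sum_bij'
      (i := fun a ha => (⟨a, (Finset.mem_filter.mp ha).2⟩ : Fin d))
      (j := fun a _ => (a : ℕ))
    case hi => intro a ha; simp only [Finset.mem_filter, Finset.mem_range, Finset.mem_univ,
        true_and] at ha ⊢; exact ha.1
    case hj => intro a ha; simp only [Finset.mem_filter, Finset.mem_range, Finset.mem_univ,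
        true_and] at ha ⊢; exact ⟨ha, a.isLt⟩
    case left_neg => intro a ha; rfl
    case right_neg => intro a ha; rfl
    case h => intro a ha; simp [(Finset.mem_filter.mp ha).2]
  · intro i _ hne
    by_contra h
    simp [h] at hne

lemma card_filter_val_lt {d j : ℕ} (hj : j ≤ d) :
    (univ.filter (fun i : Fin d => (i : ℕ) < j)).card = j := by
  rcases eq_or_lt_of_le hj with rfl | h
  · rw [Finset.filter_true_of_mem (fun i _ => i.isLt)]
    simp
  · have : univ.filter (fun i : Fin d => (i : ℕ) < j) = Finset.Iio (⟨j, h⟩ : Fin d) := by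
      ext i
      simp [Finset.mem_Iio, Fin.lt_def]
    rw [this, Fin.card_Iio]

/-- Key scalar lemma: if `x` majorizes `y` then for any `c` there is a permutation `σ`
with `∑ c i * y i ≤ ∑ c i * x (σ i)`. -/
lemma majorizes_dot_le {d : ℕ} {x y : Fin d → ℝ} (hxy : Majorizes x y) (c : Fin d → ℝ) :
    ∃ σ : Equiv.Perm (Fin d), ∑ i, c i * y i ≤ ∑ i, c i * x (σ i) := by
  classical
  rcases Nat.eq_zero_or_pos d with rfl | hd
  · exact ⟨Equiv.refl _, by simp⟩
  set τ : Equiv.Perm (Fin d) := Tuple.sort (fun i => -c i) with hτ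
  set π : Equiv.Perm (Fin d) := Tuple.sort (fun i => -x i) with hπ
  have hcτ : Antitone (fun i => c (τ i)) := by
    intro i j hij
    have := Tuple.monotone_sort (fun i => -c i) hij
    simpa using this
  have hxπ : Antitone (fun i => x (π i)) := by
    intro i j hij
    have := Tuple.monotone_sort (fun i => -x i) hij
    simpa using this
  set a : ℕ → ℝ := fun i => c (τ ⟨min i (d - 1), by omega⟩) with haa
  set Y : ℕ → ℝ := fun i => if h : i < d then y (τ ⟨i, h⟩) else 0 with hY
  set G : ℕ → ℝ := fun i => if h : i < d then x (π ⟨i, h⟩) else 0 with hG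
  have ha : ∀ i j, i ≤ j → a j ≤ a i := by
    intro i j hij
    apply hcτ
    rw [Fin.le_def]
    simp only [Fin.val_mk]
    omega
  have hpart : ∀ j ≤ d, 0 ≤ ∑ i ∈ range j, (G i - Y i) := by
    intro j hj
    rw [Finset.sum_sub_distrib, sub_nonneg, hY, hG,
      sum_range_eq_sum_filter (fun i => y (τ i)) j, sum_range_eq_sum_filter (fun i => x (π i)) j]
    have h1 : ∑ i ∈ univ.filter (fun i : Fin d => (i : ℕ) < j), y (τ i)
        = ∑ i ∈ Finset.image τ (univ.filter (fun i : Fin d => (i : ℕ) < j)), y i := by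
      rw [Finset.sum_image (fun a _ b _ hab => τ.injective hab)]
    rw [h1]
    obtain ⟨t, ht, hle⟩ := hxy.1 (Finset.image τ (univ.filter (fun i : Fin d => (i : ℕ) < j)))
    refine hle.trans ?_
    have h2 : ∑ i ∈ t, x i = ∑ i ∈ Finset.image π.symm t, x (π i) := by
      rw [Finset.sum_image (fun a _ b _ hab => π.symm.injective hab)]
      simp
    rw [h2]
    have h3 := sum_le_sum_initial hxπ (Finset.image π.symm t)
    have hcard : (Finset.image π.symm t).card = j := by
      rw [Finset.card_image_of_injective _ π.symm.injective, ht,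
        Finset.card_image_of_injective _ τ.injective, card_filter_val_lt hj]
    rw [hcard] at h3
    exact h3
  have htot : ∑ i ∈ range d, (G i - Y i) = 0 := by
    rw [Finset.sum_sub_distrib, hY, hG,
      sum_range_eq_sum_filter (fun i => y (τ i)) d, sum_range_eq_sum_filter (fun i => x (π i)) d,
      Finset.filter_true_of_mem (fun i _ => i.isLt)]
    rw [Equiv.sum_comp τ y, Equiv.sum_comp π x]
    rw [hxy.2]
    ring
  have habel := abel_bound a (fun i => G i - Y i) ha d (fun j hj => hpart j hj)
  rw [htot, mul_zero] at habel
  have hsplit : ∑ i ∈ range d, a i * (G i - Y i)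
      = ∑ i ∈ range d, a i * G i - ∑ i ∈ range d, a i * Y i := by
    rw [← Finset.sum_sub_distrib]; congr 1; ext i; ring
  rw [hsplit, sub_nonneg] at habel
  have hYs : ∑ i ∈ range d, a i * Y i = ∑ i, c i * y i := by
    have : ∀ i ∈ range d, a i * Y i
        = (if h : i < d then c (τ ⟨i, h⟩) * y (τ ⟨i, h⟩) else 0) := by
      intro i hi
      rw [Finset.mem_range] at hi
      rw [hY, haa]
      simp only [dif_pos hi]
      have hmk : (⟨min i (d - 1), by omega⟩ : Fin d) = ⟨i, hi⟩ := by
        apply Fin.ext; simp only [Fin.val_mk]; omega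
      rw [hmk]
    rw [Finset.sum_congr rfl this, sum_range_eq_sum_filter (fun i => c (τ i) * y (τ i)) d,
      Finset.filter_true_of_mem (fun i _ => i.isLt)]
    exact Equiv.sum_comp τ (fun i => c i * y i)
  have hGs : ∑ i ∈ range d, a i * G i = ∑ i, c i * x ((τ.symm.trans π) i) := by
    have : ∀ i ∈ range d, a i * G i
        = (if h : i < d then c (τ ⟨i, h⟩) * x (π ⟨i, h⟩) else 0) := by
      intro i hi
      rw [Finset.mem_range] at hi
      rw [hG, haa]
      simp only [dif_pos hi]
      have hmk : (⟨min i (d - 1), by omega⟩ : Fin d) = ⟨i, hi⟩ := by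
        apply Fin.ext; simp only [Fin.val_mk]; omega
      rw [hmk]
    rw [Finset.sum_congr rfl this, sum_range_eq_sum_filter (fun i => c (τ i) * x (π i)) d,
      Finset.filter_true_of_mem (fun i _ => i.isLt)]
    have := Equiv.sum_comp τ (fun i => c i * x (π (τ.symm i)))
    simp only [Equiv.symm_apply_apply] at this
    rw [this]
    rfl
  exact ⟨τ.symm.trans π, by rw [← hYs, ← hGs]; exact habel⟩

lemma majorizes_mem_convexHull {d : ℕ} {x y : Fin d → ℝ} (hxy : Majorizes x y) :
    y ∈ convexHull ℝ (Set.range (fun σ : Equiv.Perm (Fin d) => x ∘ σ)) := by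
  classical
  by_contra h
  have hfin : (Set.range (fun σ : Equiv.Perm (Fin d) => x ∘ σ)).Finite := Set.finite_range _
  obtain ⟨f, u, hfu1, hfu2⟩ := geometric_hahn_banach_closed_point
    (convex_convexHull ℝ _) (hfin.isClosed_convexHull (𝕜 := ℝ)) h
  set c : Fin d → ℝ := fun i => f (Pi.single i 1) with hc
  have hrep : ∀ v : Fin d → ℝ, f v = ∑ i, c i * v i := by
    intro v
    have hv : v = ∑ i, (v i) • (Pi.single i (1 : ℝ) : Fin d → ℝ) := by
      funext j
      simp [Finset.sum_apply, Pi.single_apply, mul_comm]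
    conv_lhs => rw [hv]
    rw [map_sum]
    congr 1
    funext i
    rw [ContinuousLinearMap.map_smul]
    simp [hc, mul_comm]
  obtain ⟨σ, hσ⟩ := majorizes_dot_le hxy c
  have h1 : f (x ∘ σ) < u :=
    hfu1 _ (subset_convexHull ℝ _ (Set.mem_range_self σ))
  rw [hrep] at h1 hfu2
  have : ∑ i, c i * (x ∘ σ) i = ∑ i, c i * x (σ i) := rfl
  linarith [hσ, h1, hfu2]

end Combinatorics

section Probability

variable {Ω : Type*} [MeasurableSpace Ω] (μpr : Measure Ω) [IsProbabilityMeasure μpr]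
variable {d : ℕ} (X : Fin d → Ω → ℝ)

set_option linter.unusedSectionVars false

lemma map_perm_eq_pi (hmeas : ∀ i, Measurable (X i))
    (hindep : iIndepFun X μpr)
    {ν : Measure ℝ} [IsProbabilityMeasure ν] (hdist : ∀ i, μpr.map (X i) = ν)
    (τ : Equiv.Perm (Fin d)) :
    μpr.map (fun ω => fun i => X (τ i) ω) = Measure.pi (fun _ => ν) := by
  refine (Measure.pi_eq fun s hs => ?_).symm
  have hV : Measurable (fun ω => fun i => X (τ i) ω) :=
    measurable_pi_lambda _ fun i => hmeas (τ i)
  rw [Measure.map_apply hV (MeasurableSet.univ_pi hs)]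
  have hset : (fun ω => fun i => X (τ i) ω) ⁻¹' (Set.univ.pi s)
      = ⋂ j ∈ Finset.univ, X j ⁻¹' (s (τ.symm j)) := by
    ext ω
    simp only [Set.mem_preimage, Set.mem_univ_pi, Set.mem_iInter, Finset.mem_univ,
      Set.mem_preimage]
    constructor
    · intro h j
      simpa using h (τ.symm j)
    · intro h i
      simpa using h (τ i)
  rw [hset]
  rw [iIndepFun_iff_measure_inter_preimage_eq_mul.mp hindep Finset.univ
    (sets := fun j => s (τ.symm j)) (fun i _ => hs (τ.symm i))]
  have hval : ∀ j, μpr (X j ⁻¹' (s (τ.symm j))) = ν (s (τ.symm j)) := by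
    intro j
    rw [← hdist j, Measure.map_apply (hmeas j) (hs (τ.symm j))]
  calc ∏ j, μpr (X j ⁻¹' (s (τ.symm j))) = ∏ j, ν (s (τ.symm j)) := by
        exact Finset.prod_congr rfl fun j _ => hval j
    _ = ∏ i, ν (s i) := Equiv.prod_comp τ.symm (fun i => ν (s i))

lemma map_comb_perm (hmeas : ∀ i, Measurable (X i))
    (hindep : iIndepFun X μpr)
    {ν : Measure ℝ} [IsProbabilityMeasure ν] (hdist : ∀ i, μpr.map (X i) = ν)
    (τ : Equiv.Perm (Fin d)) (c : Fin d → ℝ) :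
    μpr.map (fun ω => ∑ i, c i * X (τ i) ω)
      = μpr.map (fun ω => ∑ i, c i * X i ω) := by
  have hg : Measurable (fun v : Fin d → ℝ => ∑ i, c i * v i) := by
    exact Finset.measurable_sum _ fun i _ => (measurable_pi_apply i).const_mul _
  have h1 : (fun ω => ∑ i, c i * X (τ i) ω)
      = (fun v : Fin d → ℝ => ∑ i, c i * v i) ∘ (fun ω => fun i => X (τ i) ω) := rfl
  have h2 : (fun ω => ∑ i, c i * X i ω)
      = (fun v : Fin d → ℝ => ∑ i, c i * v i) ∘ (fun ω => fun i => X i ω) := rfl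
  rw [h1, h2, ← Measure.map_map hg (measurable_pi_lambda _ fun i => hmeas (τ i)),
    ← Measure.map_map hg (measurable_pi_lambda _ fun i => hmeas i),
    map_perm_eq_pi μpr X hmeas hindep hdist τ,
    show Measure.map (fun c i => X i c) μpr = _ from
      map_perm_eq_pi μpr X hmeas hindep hdist (Equiv.refl _)]

lemma integrable_comb_perm_iff (hmeas : ∀ i, Measurable (X i))
    (hindep : iIndepFun X μpr)
    {ν : Measure ℝ} [IsProbabilityMeasure ν] (hdist : ∀ i, μpr.map (X i) = ν)
    (τ : Equiv.Perm (Fin d)) (c : Fin d → ℝ) {φ : ℝ → ℝ} (hφ : Continuous φ) :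
    Integrable (fun ω => φ (∑ i, c i * X (τ i) ω)) μpr
      ↔ Integrable (fun ω => φ (∑ i, c i * X i ω)) μpr := by
  have hcomb : ∀ τ' : Equiv.Perm (Fin d), Measurable (fun ω => ∑ i, c i * X (τ' i) ω) :=
    fun τ' => Finset.measurable_sum _ fun i _ => ((hmeas (τ' i)).const_mul _)
  have h1 := integrable_map_measure (μ := μpr) (f := fun ω => ∑ i, c i * X (τ i) ω)
    (g := φ) hφ.aestronglyMeasurable (hcomb τ).aemeasurable
  have h2 := integrable_map_measure (μ := μpr) (f := fun ω => ∑ i, c i * X i ω)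
    (g := φ) hφ.aestronglyMeasurable (hcomb (Equiv.refl _)).aemeasurable
  rw [map_comb_perm μpr X hmeas hindep hdist τ c] at h1
  exact h1.symm.trans h2

lemma integral_comb_perm (hmeas : ∀ i, Measurable (X i))
    (hindep : iIndepFun X μpr)
    {ν : Measure ℝ} [IsProbabilityMeasure ν] (hdist : ∀ i, μpr.map (X i) = ν)
    (τ : Equiv.Perm (Fin d)) (c : Fin d → ℝ) {φ : ℝ → ℝ} (hφ : Continuous φ) :
    ∫ ω, φ (∑ i, c i * X (τ i) ω) ∂μpr = ∫ ω, φ (∑ i, c i * X i ω) ∂μpr := by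
  have hcomb : ∀ τ' : Equiv.Perm (Fin d), Measurable (fun ω => ∑ i, c i * X (τ' i) ω) :=
    fun τ' => Finset.measurable_sum _ fun i _ => ((hmeas (τ' i)).const_mul _)
  have h1 := integral_map (μ := μpr) (φ := fun ω => ∑ i, c i * X (τ i) ω)
    (f := φ) (hcomb τ).aemeasurable hφ.aestronglyMeasurable
  have h2 := integral_map (μ := μpr) (φ := fun ω => ∑ i, c i * X i ω)
    (f := φ) (hcomb (Equiv.refl _)).aemeasurable hφ.aestronglyMeasurable
  rw [map_comb_perm μpr X hmeas hindep hdist τ c] at h1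
  rw [← h1, ← h2]

/-- Main lemma: convex order from majorization for i.i.d.-type families. -/
lemma convexOrder_of_majorizes (hmeas : ∀ i, Measurable (X i))
    (hindep : iIndepFun X μpr)
    {ν : Measure ℝ} [IsProbabilityMeasure ν] (hdist : ∀ i, μpr.map (X i) = ν)
    {lam mu : Fin d → ℝ} (hmaj : Majorizes lam mu) :
    ConvexOrder μpr (fun ω => ∑ i, mu i * X i ω) (fun ω => ∑ i, lam i * X i ω) := by
  classical
  intro φ hφ hint_mu hint_lam
  have hφc : Continuous φ := continuousOn_univ.mp (hφ.continuousOn isOpen_univ)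
  set S : Finset (Fin d → ℝ) := Finset.image (fun σ : Equiv.Perm (Fin d) => lam ∘ σ)
    Finset.univ with hS
  have hmem := majorizes_mem_convexHull hmaj
  have hrange : (Set.range fun σ : Equiv.Perm (Fin d) => lam ∘ σ) = ↑S := by
    rw [hS]
    push_cast
    rw [Set.image_univ]
  rw [hrange, Finset.convexHull_eq] at hmem
  obtain ⟨w, hw0, hw1, hwmass⟩ := hmem
  rw [Finset.centerMass_eq_of_sum_1 _ _ hw1] at hwmass
  have hmu : ∀ i, mu i = ∑ p ∈ S, w p * p i := by
    intro i
    rw [← hwmass]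
    simp [Finset.sum_apply]
  have hpoint : ∀ ω, ∑ i, mu i * X i ω = ∑ p ∈ S, w p * (∑ i, p i * X i ω) := by
    intro ω
    calc ∑ i, mu i * X i ω = ∑ i, ∑ p ∈ S, (w p * p i * X i ω) := by
          refine Finset.sum_congr rfl fun i _ => ?_
          rw [hmu i, Finset.sum_mul]
      _ = ∑ p ∈ S, ∑ i, (w p * p i * X i ω) := Finset.sum_comm
      _ = ∑ p ∈ S, w p * (∑ i, p i * X i ω) := by
          refine Finset.sum_congr rfl fun p _ => ?_
          rw [Finset.mul_sum]
          exact Finset.sum_congr rfl fun i _ => by ring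
  have hterm : ∀ p ∈ S, Integrable (fun ω => φ (∑ i, p i * X i ω)) μpr ∧
      ∫ ω, φ (∑ i, p i * X i ω) ∂μpr = ∫ ω, φ (∑ i, lam i * X i ω) ∂μpr := by
    intro p hp
    rw [hS, Finset.mem_image] at hp
    obtain ⟨σ, -, rfl⟩ := hp
    have hrew : ∀ ω, (∑ i, (lam ∘ σ) i * X i ω)
        = ∑ i, lam i * X (σ.symm i) ω := by
      intro ω
      have h := Equiv.sum_comp σ.symm (fun i => lam (σ i) * X i ω)
      simp only [Equiv.apply_symm_apply] at h
      exact h.symm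
    simp only [hrew]
    exact ⟨(integrable_comb_perm_iff μpr X hmeas hindep hdist σ.symm lam hφc).mpr hint_lam,
      integral_comb_perm μpr X hmeas hindep hdist σ.symm lam hφc⟩
  have hjensen : ∀ ω, φ (∑ i, mu i * X i ω) ≤ ∑ p ∈ S, w p * φ (∑ i, p i * X i ω) := by
    intro ω
    rw [hpoint ω]
    have h := hφ.map_sum_le (t := S) (w := w) (p := fun p => ∑ i, p i * X i ω) hw0 hw1
      (fun p _ => Set.mem_univ _)
    simpa [smul_eq_mul] using h
  have hint_terms : Integrable (fun ω => ∑ p ∈ S, w p * φ (∑ i, p i * X i ω)) μpr :=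
    integrable_finset_sum _ (fun p hp => ((hterm p hp).1.const_mul (w p)))
  calc ∫ ω, φ (∑ i, mu i * X i ω) ∂μpr
      ≤ ∫ ω, ∑ p ∈ S, w p * φ (∑ i, p i * X i ω) ∂μpr :=
        integral_mono hint_mu hint_terms hjensen
    _ = ∑ p ∈ S, w p * ∫ ω, φ (∑ i, p i * X i ω) ∂μpr := by
        rw [integral_finset_sum _ (fun p hp => ((hterm p hp).1.const_mul (w p)))]
        exact Finset.sum_congr rfl fun p hp => MeasureTheory.integral_const_mul _ _
    _ = ∑ p ∈ S, w p * ∫ ω, φ (∑ i, lam i * X i ω) ∂μpr :=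
        Finset.sum_congr rfl fun p hp => by rw [(hterm p hp).2]
    _ = ∫ ω, φ (∑ i, lam i * X i ω) ∂μpr := by rw [← Finset.sum_mul, hw1, one_mul]

end Probability

section MajorizationFacts

lemma majorizes_unit {d : ℕ} (hd : 0 < d) {lam : Fin d → ℝ}
    (hlam : lam ∈ stdSimplex ℝ (Fin d)) :
    Majorizes lam (fun _ => (d : ℝ)⁻¹) := by
  classical
  constructor
  · intro s
    set m := s.card with hmdef
    have hm : m ≤ d := by simpa using s.card_le_univ
    have hne : (Finset.univ.powersetCard m : Finset (Finset (Fin d))).Nonempty := by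
      apply Finset.powersetCard_nonempty.mpr
      simpa using hm
    obtain ⟨t, htmem, htmax⟩ := Finset.exists_max_image _ (fun t => ∑ i ∈ t, lam i) hne
    have htcard : t.card = m := (Finset.mem_powersetCard_univ.mp htmem)
    refine ⟨t, htcard, ?_⟩
    have hkey : ∀ i ∈ t, ∀ j ∉ t, lam j ≤ lam i := by
      intro i hi j hj
      by_contra hlt
      push_neg at hlt
      have hmem' : insert j (t.erase i) ∈ Finset.univ.powersetCard m := by
        rw [Finset.mem_powersetCard_univ, Finset.card_insert_of_notMem
          (fun h => hj (Finset.mem_of_mem_erase h)), Finset.card_erase_of_mem hi, htcard]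
        have : 1 ≤ m := by
          rw [← htcard]
          exact Finset.card_pos.mpr ⟨i, hi⟩
        omega
      have hsum : ∑ x ∈ insert j (t.erase i), lam x = lam j + (∑ x ∈ t, lam x - lam i) := by
        rw [Finset.sum_insert (fun h => hj (Finset.mem_of_mem_erase h)),
          Finset.sum_erase_eq_sub hi]
      have := htmax _ hmem'
      rw [hsum] at this
      linarith
    -- (d - m) * ∑_t lam ≥ m * (1 - ∑_t lam)
    have hcompl : ∑ i ∈ tᶜ, lam i = 1 - ∑ i ∈ t, lam i := by
      have := Finset.sum_add_sum_compl t lam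
      rw [hlam.2] at this
      linarith
    have hdouble : ∑ i ∈ t, ∑ _j ∈ tᶜ, lam _j ≤ ∑ i ∈ t, ∑ _j ∈ tᶜ, lam i := by
      refine Finset.sum_le_sum fun i hi => Finset.sum_le_sum fun j hj => ?_
      exact hkey i hi j (by simpa using hj)
    have hccard : (tᶜ.card : ℝ) = (d : ℝ) - m := by
      rw [Finset.card_compl, htcard, Fintype.card_fin, Nat.cast_sub hm]
    have hL : ∑ i ∈ t, ∑ _j ∈ tᶜ, lam i = ((d : ℝ) - m) * ∑ i ∈ t, lam i := by
      simp only [Finset.sum_const, nsmul_eq_mul]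
      rw [← Finset.mul_sum, hccard]
    have hR : ∑ _i ∈ t, ∑ j ∈ tᶜ, lam j = (m : ℝ) * (1 - ∑ i ∈ t, lam i) := by
      rw [Finset.sum_const, hcompl, nsmul_eq_mul, htcard]
    rw [hL, hR] at hdouble
    have hdpos : (0 : ℝ) < d := by exact_mod_cast hd
    have hsle : ∑ _i ∈ s, (d : ℝ)⁻¹ = (m : ℝ) * (d : ℝ)⁻¹ := by
      rw [Finset.sum_const, nsmul_eq_mul, hmdef]
    rw [hsle]
    rw [div_eq_mul_inv (m : ℝ) (d : ℝ) |>.symm, div_le_iff₀ hdpos] ; nlinarith [hdouble]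
  · have hdne : (d : ℝ) ≠ 0 := ne_of_gt (by exact_mod_cast hd)
    rw [hlam.2, Finset.sum_const, Finset.card_univ, Fintype.card_fin, nsmul_eq_mul,
      mul_inv_cancel₀ hdne]

lemma majorizes_basis {d : ℕ} (hd : 0 < d) {lam : Fin d → ℝ}
    (hlam : lam ∈ stdSimplex ℝ (Fin d)) :
    Majorizes (fun i : Fin d => if (i : ℕ) = 0 then (1 : ℝ) else 0) lam := by
  classical
  have hsum_e : ∀ t : Finset (Fin d), (⟨0, hd⟩ : Fin d) ∈ t →
      ∑ i ∈ t, (if (i : ℕ) = 0 then (1 : ℝ) else 0) = 1 := by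
    intro t ht
    have : ∀ i : Fin d, (if (i : ℕ) = 0 then (1 : ℝ) else 0)
        = if i = ⟨0, hd⟩ then (1 : ℝ) else 0 := by
      intro i
      congr 1
      simp [Fin.ext_iff]
    simp only [this]
    rw [Finset.sum_ite_eq' t ⟨0, hd⟩ (fun _ => (1 : ℝ))]
    simp [ht]
  constructor
  · intro s
    rcases Finset.eq_empty_or_nonempty s with rfl | hs
    · exact ⟨∅, rfl, by simp⟩
    · set m := s.card with hmdef
      have hm1 : 1 ≤ m := Finset.card_pos.mpr hs
      have hm : m ≤ d := by simpa using s.card_le_univ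
      obtain ⟨t₀, ht₀sub, ht₀card⟩ := Finset.exists_subset_card_eq
        (s := Finset.univ.erase (⟨0, hd⟩ : Fin d)) (n := m - 1)
        (by rw [Finset.card_erase_of_mem (Finset.mem_univ _)]; simp; omega)
      have h0not : (⟨0, hd⟩ : Fin d) ∉ t₀ := fun h =>
        (Finset.notMem_erase _ _) (ht₀sub h)
      refine ⟨insert ⟨0, hd⟩ t₀, ?_, ?_⟩
      · rw [Finset.card_insert_of_notMem h0not, ht₀card]
        omega
      · rw [hsum_e _ (Finset.mem_insert_self _ _)]
        calc ∑ i ∈ s, lam i ≤ ∑ i, lam i :=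
              Finset.sum_le_sum_of_subset_of_nonneg (Finset.subset_univ s)
                (fun i _ _ => hlam.1 i)
          _ = 1 := hlam.2
  · rw [hsum_e Finset.univ (Finset.mem_univ _), hlam.2]

end MajorizationFacts

/-- For i.i.d. `X_i ~ (1/k)χ²(k)` (i.e. `Gamma(k/2, k/2)`), if `λ` majorizes `μ` in the
probability simplex then `X(μ) = ∑ μ_i X_i ⪯_cvx X(λ) = ∑ λ_i X_i`; in particular, with
`e = (1,0,...,0)` and `u = (1/d,...,1/d)`, `X(u) ⪯_cvx X(λ) ⪯_cvx X(e)` for all `λ` in the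
simplex. -/
theorem convexOrder_weighted_chiSq {Ω : Type*} [MeasurableSpace Ω]
    (μpr : Measure Ω) [IsProbabilityMeasure μpr] {d k : ℕ} (hd : 0 < d) (hk : 0 < k)
    (X : Fin d → Ω → ℝ)
    (hmeas : ∀ i, Measurable (X i))
    (hindep : iIndepFun X μpr)
    (hdist : ∀ i, μpr.map (X i) = gammaMeasure ((k : ℝ) / 2) ((k : ℝ) / 2)) :
    (∀ lam mu : Fin d → ℝ, lam ∈ stdSimplex ℝ (Fin d) → mu ∈ stdSimplex ℝ (Fin d) →
      Majorizes lam mu →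
      ConvexOrder μpr (fun ω => ∑ i, mu i * X i ω) (fun ω => ∑ i, lam i * X i ω)) ∧
    (∀ lam : Fin d → ℝ, lam ∈ stdSimplex ℝ (Fin d) →
      ConvexOrder μpr (fun ω => ∑ i, ((d : ℝ)⁻¹) * X i ω) (fun ω => ∑ i, lam i * X i ω) ∧
      ConvexOrder μpr (fun ω => ∑ i, lam i * X i ω)
        (fun ω => ∑ i, (if i.val = 0 then (1 : ℝ) else 0) * X i ω)) := by
  have hν : ∀ i, μpr.map (X i) = μpr.map (X ⟨0, hd⟩) := fun i => by
    rw [hdist i, hdist ⟨0, hd⟩]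
  haveI : IsProbabilityMeasure (μpr.map (X ⟨0, hd⟩)) :=
    Measure.isProbabilityMeasure_map (hmeas _).aemeasurable
  refine ⟨fun lam mu _ _ hmaj => convexOrder_of_majorizes μpr X hmeas hindep hν hmaj,
    fun lam hlam => ⟨convexOrder_of_majorizes μpr X hmeas hindep hν (majorizes_unit hd hlam),
      convexOrder_of_majorizes μpr X hmeas hindep hν (majorizes_basis hd hlam)⟩⟩
end

section
/- Consider the randomized-clipping Gaussian mechanism M(g_1,...,g_n) = ∑_j (√k / (‖g_j‖ Z_j)) g_j + N with Z_j ~ χ(k) independent and N ~ N(0, σ² I). For every α > 1 there exist neighboring datasets for which the Rényi divergence of order α between the outputs is infinite; hence M admits no finite RDP guarantee of any order α > 1. -/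
open MeasureTheory ProbabilityTheory Finset

/-- The chi distribution with `k` degrees of freedom: the law of `√W` for `W ~ χ²(k)`. -/
noncomputable def chiMeasure (k : ℕ) : Measure ℝ :=
  Measure.map Real.sqrt (gammaMeasure ((k : ℝ) / 2) (1 / 2))

open Real Set Filter in
lemma aux_chi_lb (k : ℕ) (hk : 1 ≤ k) :
    ∃ C : ℝ, 0 < C ∧ ∀ s : ℝ, 0 < s → s ≤ 1 →
      ENNReal.ofReal (C * s ^ (2 * k + 2)) ≤ chiMeasure k (Ioc 0 s) := by
  have hk2 : (0:ℝ) < (k:ℝ)/2 := by positivity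
  have hG : 0 < Real.Gamma ((k:ℝ)/2) := Real.Gamma_pos_of_pos hk2
  set Cγ : ℝ := (1/2:ℝ) ^ ((k:ℝ)/2) / Real.Gamma ((k:ℝ)/2) * Real.exp (-(2⁻¹)) with hCγ
  have hCγpos : 0 < Cγ := by positivity
  refine ⟨Cγ / 2 ^ (k+1), by positivity, fun s hs hs1 => ?_⟩
  have hs2 : (0:ℝ) < s^2 := by positivity
  have hs21 : s^2 ≤ 1 := by nlinarith
  have hmap : chiMeasure k (Ioc 0 s) = gammaMeasure ((k:ℝ)/2) (1/2) (Ioc 0 (s^2)) := by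
    rw [chiMeasure, Measure.map_apply Real.continuous_sqrt.measurable measurableSet_Ioc]
    congr 1
    ext y
    simp only [Set.mem_preimage, Set.mem_Ioc]
    constructor
    · rintro ⟨h1, h2⟩
      have hy : 0 < y := Real.sqrt_pos.mp h1
      refine ⟨hy, ?_⟩
      have := pow_le_pow_left₀ (Real.sqrt_nonneg y) h2 2
      rwa [Real.sq_sqrt hy.le] at this
    · rintro ⟨h1, h2⟩
      refine ⟨Real.sqrt_pos.mpr h1, ?_⟩
      calc Real.sqrt y ≤ Real.sqrt (s^2) := Real.sqrt_le_sqrt h2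
      _ = s := Real.sqrt_sq hs.le
  rw [hmap, gammaMeasure, withDensity_apply _ measurableSet_Ioc]
  have hsub : Ioc (s^2/2) (s^2) ⊆ Ioc 0 (s^2) := Ioc_subset_Ioc_left (by linarith)
  refine le_trans ?_ (lintegral_mono_set hsub)
  have hpt : ∀ y ∈ Ioc (s^2/2) (s^2),
      ENNReal.ofReal (Cγ * (s^2/2)^k) ≤ gammaPDF ((k:ℝ)/2) (1/2) y := by
    intro y hy
    obtain ⟨hy1, hy2⟩ := hy
    have hy0 : 0 < y := lt_trans (by positivity) hy1
    have hy11 : y ≤ 1 := le_trans hy2 hs21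
    rw [gammaPDF_of_nonneg hy0.le]
    apply ENNReal.ofReal_le_ofReal
    have h1 : (s^2/2)^k ≤ y ^ ((k:ℝ)/2 - 1) :=
      calc (s^2/2)^k ≤ y ^ k := pow_le_pow_left₀ (by positivity) hy1.le k
      _ = y ^ (k:ℝ) := (Real.rpow_natCast y k).symm
      _ ≤ y ^ ((k:ℝ)/2 - 1) := Real.rpow_le_rpow_of_exponent_ge hy0 hy11 (by
            have : (1:ℝ) ≤ k := by exact_mod_cast hk
            linarith)
    have h2 : Real.exp (-(2⁻¹)) ≤ Real.exp (-((1:ℝ)/2 * y)) := by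
      apply Real.exp_le_exp.mpr; linarith
    calc Cγ * (s^2/2)^k
        = (1/2:ℝ)^((k:ℝ)/2) / Real.Gamma ((k:ℝ)/2) * (s^2/2)^k * Real.exp (-(2⁻¹)) := by
          rw [hCγ]; ring
      _ ≤ (1/2:ℝ)^((k:ℝ)/2) / Real.Gamma ((k:ℝ)/2) * y ^ ((k:ℝ)/2 - 1)
            * Real.exp (-((1:ℝ)/2 * y)) := by
          apply mul_le_mul (mul_le_mul_of_nonneg_left h1 (by positivity)) h2
            (Real.exp_pos _).le (by positivity)
  calc ENNReal.ofReal (Cγ/2^(k+1) * s^(2*k+2))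
      = ENNReal.ofReal (Cγ * (s^2/2)^k) * ENNReal.ofReal (s^2/2) := by
        rw [← ENNReal.ofReal_mul (by positivity)]
        congr 1
        field_simp
        have h12 : ((1:ℝ)/2)^k * 2^k = 1 := by rw [← mul_pow]; norm_num
        linear_combination (-(s^2*s^(k*2)*2)) * h12
    _ = ENNReal.ofReal (Cγ * (s^2/2)^k) * volume (Ioc (s^2/2) (s^2)) := by
        rw [Real.volume_Ioc]; congr 1; ring_nf
    _ = ∫⁻ y in Ioc (s^2/2) (s^2), ENNReal.ofReal (Cγ * (s^2/2)^k) := (setLIntegral_const _ _).symm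
    _ ≤ ∫⁻ y in Ioc (s^2/2) (s^2), gammaPDF ((k:ℝ)/2) (1/2) y :=
        setLIntegral_mono (measurable_gammaPDFReal _ _).ennreal_ofReal hpt

open Real Set Filter in
lemma aux_gauss_tail (v : NNReal) (hv : v ≠ 0) :
    ∀ x : ℝ, 1 ≤ x → 2 * (v : ℝ) ≤ x →
      gaussianReal 0 v (Ici x) ≤ ENNReal.ofReal ((Real.sqrt (2 * π * v))⁻¹ * Real.exp (-x)) := by
  intro x hx1 hxv
  have hv0 : (0:ℝ) < v := by exact_mod_cast pos_iff_ne_zero.mpr hv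
  rw [gaussianReal_apply _ hv]
  have hpt : ∀ t ∈ Ici x, gaussianPDF 0 v t
      ≤ ENNReal.ofReal ((Real.sqrt (2 * π * v))⁻¹ * Real.exp (-t)) := by
    intro t ht
    have ht0 : (0:ℝ) < t := lt_of_lt_of_le one_pos (le_trans hx1 ht)
    rw [gaussianPDF]
    apply ENNReal.ofReal_le_ofReal
    unfold gaussianPDFReal
    have key : -(t - 0)^2 / (2 * (v:ℝ)) ≤ -t := by
      rw [div_le_iff₀ (by positivity)]
      nlinarith [le_trans hxv ht]
    exact mul_le_mul_of_nonneg_left (Real.exp_le_exp.mpr key) (by positivity)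
  have hint : IntegrableOn (fun t : ℝ => (Real.sqrt (2 * π * v))⁻¹ * Real.exp (-t)) (Ici x) := by
    have h0 : IntegrableOn (fun t : ℝ => Real.exp (-1 * t)) (Ioi (x-1)) :=
      exp_neg_integrableOn_Ioi (x-1) one_pos
    simp only [neg_one_mul] at h0
    exact ((h0.mono_set (Ici_subset_Ioi.mpr (by linarith))).const_mul _)
  calc ∫⁻ t in Ici x, gaussianPDF 0 v t
      ≤ ∫⁻ t in Ici x, ENNReal.ofReal ((Real.sqrt (2 * π * v))⁻¹ * Real.exp (-t)) :=
        setLIntegral_mono ((measurable_exp.comp measurable_neg).const_mul _).ennreal_ofReal hpt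
    _ = ENNReal.ofReal (∫ t in Ici x, (Real.sqrt (2 * π * v))⁻¹ * Real.exp (-t)) := by
        rw [ofReal_integral_eq_lintegral_ofReal hint]
        exact Eventually.of_forall fun t => by positivity
    _ = ENNReal.ofReal ((Real.sqrt (2 * π * v))⁻¹ * Real.exp (-x)) := by
        rw [MeasureTheory.integral_Ici_eq_integral_Ioi, MeasureTheory.integral_const_mul,
          integral_exp_neg_Ioi]

open Real Set Filter in
lemma aux_gauss_icc (v : NNReal) (hv : v ≠ 0) :
    ENNReal.ofReal (gaussianPDFReal 0 v 1) ≤ gaussianReal 0 v (Icc 0 1) := by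
  rw [gaussianReal_apply _ hv]
  have hv0 : (0:ℝ) < v := by exact_mod_cast pos_iff_ne_zero.mpr hv
  calc ENNReal.ofReal (gaussianPDFReal 0 v 1)
      = ENNReal.ofReal (gaussianPDFReal 0 v 1) * volume (Icc (0:ℝ) 1) := by
        simp [Real.volume_Icc]
    _ = ∫⁻ _ in Icc (0:ℝ) 1, ENNReal.ofReal (gaussianPDFReal 0 v 1) := (setLIntegral_const _ _).symm
    _ ≤ ∫⁻ t in Icc (0:ℝ) 1, gaussianPDF 0 v t := by
        refine setLIntegral_mono (measurable_gaussianPDF 0 v) fun t ht => ?_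
        rw [gaussianPDF]
        apply ENNReal.ofReal_le_ofReal
        unfold gaussianPDFReal
        refine mul_le_mul_of_nonneg_left (Real.exp_le_exp.mpr ?_) (by positivity)
        obtain ⟨ht0, ht1⟩ := ht
        gcongr

open Real Set Filter in
lemma aux_absCont {Ω : Type*} [MeasurableSpace Ω] (μ : Measure Ω) [IsProbabilityMeasure μ]
    (X N : Ω → ℝ) (hX : Measurable X) (hN : Measurable N) (hXN : IndepFun X N μ)
    (v : NNReal) (hv : v ≠ 0) (hNd : μ.map N = gaussianReal 0 v) :
    μ.map (fun ω => X ω + N ω) ≪ μ.map N := by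
  have hjoint : μ.map (fun ω => (X ω, N ω)) = (μ.map X).prod (μ.map N) :=
    (indepFun_iff_map_prod_eq_prod_map_map hX.aemeasurable hN.aemeasurable).mp hXN
  have hadd : Measurable (fun p : ℝ × ℝ => p.1 + p.2) := measurable_fst.add measurable_snd
  haveI : IsProbabilityMeasure (μ.map N) := Measure.isProbabilityMeasure_map hN.aemeasurable
  haveI : IsProbabilityMeasure (μ.map X) := Measure.isProbabilityMeasure_map hX.aemeasurable
  have hP : μ.map (fun ω => X ω + N ω)
      = ((μ.map X).prod (μ.map N)).map (fun p : ℝ × ℝ => p.1 + p.2) := by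
    rw [← hjoint, Measure.map_map hadd (hX.prodMk hN)]
    rfl
  refine Measure.AbsolutelyContinuous.mk fun s hs h0 => ?_
  rw [hNd] at h0
  have hvol : volume s = 0 := gaussianReal_absolutelyContinuous' 0 hv h0
  rw [hP, Measure.map_apply hadd hs, Measure.prod_apply (hadd hs)]
  have hz : ∀ x : ℝ, (μ.map N) (Prod.mk x ⁻¹' ((fun p : ℝ × ℝ => p.1 + p.2) ⁻¹' s)) = 0 := by
    intro x
    have hpre : (Prod.mk x ⁻¹' ((fun p : ℝ × ℝ => p.1 + p.2) ⁻¹' s))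
        = (fun y => x + y) ⁻¹' s := rfl
    rw [hpre, hNd]
    refine gaussianReal_absolutelyContinuous 0 hv ?_
    rw [measure_preimage_add]
    exact hvol
  simp [hz]

open Real Set Filter in
lemma aux_holder {P Q : Measure ℝ} [IsFiniteMeasure P] [IsFiniteMeasure Q]
    (hPQ : P ≪ Q) {α : ℝ} (hα : 1 < α) {A : Set ℝ} (hA : MeasurableSet A) :
    P A ≤ (∫⁻ x, (P.rnDeriv Q x) ^ α ∂Q) ^ (1/α) * (Q A) ^ ((α-1)/α) := by
  have hq : Real.HolderConjugate α (α/(α-1)) := Real.HolderConjugate.conjExponent hα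
  have hmeas := Measure.measurable_rnDeriv P Q
  have h1 : P A = ∫⁻ x, (P.rnDeriv Q * A.indicator fun _ => (1:ENNReal)) x ∂Q := by
    rw [← Measure.setLIntegral_rnDeriv hPQ A, ← lintegral_indicator hA]
    congr 1
    ext x
    by_cases hx : x ∈ A <;> simp [hx]
  rw [h1]
  refine le_trans (ENNReal.lintegral_mul_le_Lp_mul_Lq Q hq hmeas.aemeasurable
    (((measurable_const (a := (1:ENNReal))).indicator hA).aemeasurable)) ?_
  have hq0 : (0:ℝ) < α/(α-1) := by
    have h := sub_pos.mpr hα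
    positivity
  have h2 : ∫⁻ x, (A.indicator (fun _ => (1:ENNReal)) x) ^ (α/(α-1)) ∂Q = Q A := by
    have he : (fun x => (A.indicator (fun _ => (1:ENNReal)) x) ^ (α/(α-1)))
        = A.indicator (fun _ => (1:ENNReal)) := by
      ext x
      by_cases hx : x ∈ A <;>
        simp [hx, ENNReal.zero_rpow_of_pos hq0]
    rw [he, lintegral_indicator hA, setLIntegral_one]
  rw [h2]
  have : 1 / (α/(α-1)) = (α-1)/α := one_div_div _ _
  rw [this]

open Real Set Filter in
lemma aux_tendsto (m : ℕ) {b : ℝ} (hb : 0 < b) :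
    Filter.Tendsto (fun x : ℝ => (1+x)^m * Real.exp (-(b*x))) Filter.atTop (nhds 0) := by
  have hg : Filter.Tendsto (fun x : ℝ => (2^m / b^m) * ((b*x)^m * Real.exp (-(b*x))))
      Filter.atTop (nhds 0) := by
    have h1 : Filter.Tendsto (fun x : ℝ => b * x) Filter.atTop Filter.atTop :=
      Filter.Tendsto.const_mul_atTop hb Filter.tendsto_id
    have h2 := (tendsto_pow_mul_exp_neg_atTop_nhds_zero m).comp h1
    have := h2.const_mul (2^m / b^m)
    simpa using this
  refine squeeze_zero' ?_ ?_ hg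
  · filter_upwards [Filter.eventually_ge_atTop (0:ℝ)] with x hx
    positivity
  · filter_upwards [Filter.eventually_ge_atTop (1:ℝ)] with x hx
    have hx0 : (0:ℝ) < x := by linarith
    have h1 : (1+x)^m ≤ (2*x)^m := by
      apply pow_le_pow_left₀ (by linarith) (by linarith)
    calc (1+x)^m * Real.exp (-(b*x)) ≤ (2*x)^m * Real.exp (-(b*x)) := by
          exact mul_le_mul_of_nonneg_right h1 (Real.exp_pos _).le
      _ = (2^m / b^m) * ((b*x)^m * Real.exp (-(b*x))) := by
          field_simp
          ring

open Real Set Filter in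
lemma aux_main {Ω : Type*} [MeasurableSpace Ω] (μ : Measure Ω) [IsProbabilityMeasure μ]
    (k : ℕ) (hk : 1 ≤ k) (v : NNReal) (hv : v ≠ 0)
    (W N : Ω → ℝ) (hWm : Measurable W) (hNm : Measurable N) (hWN : IndepFun W N μ)
    (hWdist : μ.map W = chiMeasure k) (hNdist : μ.map N = gaussianReal 0 v)
    (α : ℝ) (hα : 1 < α) :
    ∫⁻ x, ((μ.map (fun ω => Real.sqrt k / W ω + N ω)).rnDeriv (μ.map N) x) ^ α
      ∂(μ.map N) = ⊤ := by
  have hv0 : (0:ℝ) < v := by exact_mod_cast pos_iff_ne_zero.mpr hv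
  have hXm : Measurable (fun ω => Real.sqrt k / W ω) := measurable_const.div hWm
  have hXN : IndepFun (fun ω => Real.sqrt k / W ω) N μ :=
    hWN.comp (measurable_const.div measurable_id) measurable_id
  set P := μ.map (fun ω => Real.sqrt k / W ω + N ω) with hPdef
  set Q := μ.map N with hQdef
  haveI : IsProbabilityMeasure Q := Measure.isProbabilityMeasure_map hNm.aemeasurable
  haveI : IsProbabilityMeasure P := Measure.isProbabilityMeasure_map (hXm.add hNm).aemeasurable
  have hPQ : P ≪ Q := aux_absCont μ (fun ω => Real.sqrt k / W ω) N hXm hNm hXN v hv hNdist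
  set I := ∫⁻ x, (P.rnDeriv Q x) ^ α ∂Q with hIdef
  by_contra hI
  -- basic positivity facts
  have hβ : 0 < (α-1)/α := by
    have : (0:ℝ) < α - 1 := by linarith
    positivity
  set β := (α-1)/α with hβdef
  have hRfin : I ^ (1/α) ≠ ⊤ := ENNReal.rpow_ne_top_of_nonneg (by positivity) hI
  set R := (I ^ (1/α)).toReal with hRdef
  have hR0 : 0 ≤ R := ENNReal.toReal_nonneg
  obtain ⟨C, hC, hCs⟩ := aux_chi_lb k hk
  have hcgpos : 0 < gaussianPDFReal 0 v 1 := gaussianPDFReal_pos 0 v 1 hv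
  set cg := gaussianPDFReal 0 v 1 with hcgdef
  set E := (Real.sqrt (2 * Real.pi * v))⁻¹ with hEdef
  have hE : 0 < E := by positivity
  have hk1 : (1:ℝ) ≤ Real.sqrt k := by
    rw [show (1:ℝ) = Real.sqrt 1 by simp]
    exact Real.sqrt_le_sqrt (by exact_mod_cast hk)
  have hks : (0:ℝ) < Real.sqrt k := lt_of_lt_of_le one_pos hk1
  set D := cg * (C * (Real.sqrt k)^(2*k+2)) with hDdef
  have hD : 0 < D := by positivity
  -- lower bound on P (Ici x)
  have hlow : ∀ x : ℝ, Real.sqrt k ≤ x → ENNReal.ofReal (D / (x+1)^(2*k+2)) ≤ P (Ici x) := by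
    intro x hx
    have hx0 : (0:ℝ) < x := lt_of_lt_of_le hks hx
    have hx1 : (0:ℝ) < x + 1 := by linarith
    set s := Real.sqrt k / (x+1) with hsdef
    have hspos : 0 < s := by positivity
    have hs1 : s ≤ 1 := by
      rw [hsdef, div_le_one hx1]; linarith
    have hsub : (W ⁻¹' Ioc 0 s) ∩ (N ⁻¹' Icc 0 1)
        ⊆ (fun ω => Real.sqrt k / W ω + N ω) ⁻¹' (Ici x) := by
      rintro ω ⟨⟨hw1, hw2⟩, hn1, hn2⟩
      simp only [Set.mem_preimage, Set.mem_Ici]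
      have h1 : Real.sqrt k / s ≤ Real.sqrt k / W ω :=
        div_le_div_of_nonneg_left hks.le hw1 hw2
      have h2 : Real.sqrt k / s = x + 1 := by
        rw [hsdef]
        field_simp
      linarith [h2 ▸ h1]
    calc ENNReal.ofReal (D / (x+1)^(2*k+2))
        = ENNReal.ofReal (C * s^(2*k+2)) * ENNReal.ofReal cg := by
          rw [← ENNReal.ofReal_mul (by positivity)]
          congr 1
          rw [hsdef, div_pow, hDdef]
          field_simp
      _ ≤ chiMeasure k (Ioc 0 s) * gaussianReal 0 v (Icc 0 1) :=
          mul_le_mul' (hCs s hspos hs1) (aux_gauss_icc v hv)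
      _ = μ (W ⁻¹' Ioc 0 s) * μ (N ⁻¹' Icc 0 1) := by
          rw [← hWdist, Measure.map_apply hWm measurableSet_Ioc]
          have : gaussianReal 0 v = Q := hNdist.symm
          rw [this, hQdef, Measure.map_apply hNm measurableSet_Icc]
      _ = μ ((W ⁻¹' Ioc 0 s) ∩ (N ⁻¹' Icc 0 1)) :=
          (hWN.measure_inter_preimage_eq_mul _ _ measurableSet_Ioc measurableSet_Icc).symm
      _ ≤ μ ((fun ω => Real.sqrt k / W ω + N ω) ⁻¹' (Ici x)) := measure_mono hsub
      _ = P (Ici x) := (Measure.map_apply (hXm.add hNm) measurableSet_Ici).symm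
  -- combine with Hölder and the Gaussian tail bound
  have hmain : ∀ x : ℝ, max (max 1 (2*(v:ℝ))) (Real.sqrt k) ≤ x →
      D ≤ (R * E ^ β) * ((1+x)^(2*k+2) * Real.exp (-(β * x))) := by
    intro x hx
    have hx1 : (1:ℝ) ≤ x := le_trans (le_trans (le_max_left _ _) (le_max_left _ _)) hx
    have hxv : 2*(v:ℝ) ≤ x := le_trans (le_trans (le_max_right _ _) (le_max_left _ _)) hx
    have hxk : Real.sqrt k ≤ x := le_trans (le_max_right _ _) hx
    have hx0 : (0:ℝ) < x := lt_of_lt_of_le one_pos hx1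
    have h1 := hlow x hxk
    have h2 : Q (Ici x) ≤ ENNReal.ofReal (E * Real.exp (-x)) := by
      rw [hNdist]
      exact aux_gauss_tail v hv x hx1 hxv
    have h3 := aux_holder hPQ hα (measurableSet_Ici (a := x))
    have h4 : ENNReal.ofReal (D / (x+1)^(2*k+2))
        ≤ I ^ (1/α) * ENNReal.ofReal ((E * Real.exp (-x)) ^ β) := by
      refine le_trans h1 (le_trans h3 ?_)
      rw [← ENNReal.ofReal_rpow_of_nonneg (by positivity) hβ.le]
      exact mul_le_mul_right (ENNReal.rpow_le_rpow h2 hβ.le) _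
    have h5 : D / (x+1)^(2*k+2) ≤ R * (E * Real.exp (-x)) ^ β := by
      have hne : I ^ (1/α) * ENNReal.ofReal ((E * Real.exp (-x)) ^ β) ≠ ⊤ :=
        ENNReal.mul_ne_top hRfin ENNReal.ofReal_ne_top
      have := (ENNReal.ofReal_le_iff_le_toReal hne).mp h4
      rwa [ENNReal.toReal_mul, ENNReal.toReal_ofReal (by positivity)] at this
    have h6 : (E * Real.exp (-x)) ^ β = E ^ β * Real.exp (-(β * x)) := by
      rw [Real.mul_rpow hE.le (Real.exp_pos _).le, ← Real.exp_mul]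
      ring_nf
    rw [h6] at h5
    have hx1p : (0:ℝ) < (x+1)^(2*k+2) := by positivity
    calc D = (D / (x+1)^(2*k+2)) * (x+1)^(2*k+2) := by field_simp
      _ ≤ (R * (E ^ β * Real.exp (-(β * x)))) * (x+1)^(2*k+2) :=
          mul_le_mul_of_nonneg_right h5 hx1p.le
      _ = (R * E ^ β) * ((1+x)^(2*k+2) * Real.exp (-(β * x))) := by ring_nf
  -- contradiction via the limit
  have htend : Filter.Tendsto
      (fun x : ℝ => (R * E ^ β) * ((1+x)^(2*k+2) * Real.exp (-(β * x))))
      Filter.atTop (nhds 0) := by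
    have := (aux_tendsto (2*k+2) hβ).const_mul (R * E ^ β)
    simpa using this
  have hev : ∀ᶠ x : ℝ in Filter.atTop,
      (R * E ^ β) * ((1+x)^(2*k+2) * Real.exp (-(β * x))) < D :=
    htend.eventually_lt_const hD
  obtain ⟨x, hx1, hx2⟩ :=
    (hev.and (Filter.eventually_ge_atTop (max (max 1 (2*(v:ℝ))) (Real.sqrt k)))).exists
  exact absurd (hmain x hx2) (not_le.mpr hx1)

/-- The randomized-clipping Gaussian mechanism
`M(g₁,...,g_n)(ω) = ∑_j (√k / (‖g_j‖ Z_j(ω))) g_j + N(ω)` with `Z_j ~ χ(k)` independent and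
`N` Gaussian of variance `σ²`. For every Rényi order `α > 1` there exist neighboring datasets
`(g₁,...,g_c)` and `(g₁,...,g_{c+1})` (all `g_j ≠ 0`) for which the Rényi divergence of the
corresponding output distributions is infinite, i.e.
`∫ (dP/dQ)^α dQ = ∞`; hence `M` admits no finite RDP guarantee of any order `α > 1`. -/
theorem no_rdp_for_randomized_clipping {Ω : Type*} [MeasurableSpace Ω]
    (μ : Measure Ω) [IsProbabilityMeasure μ] (k : ℕ) (hk : 1 ≤ k)
    (σ : NNReal) (hσ : 0 < σ)
    (Z : ℕ → Ω → ℝ) (N : Ω → ℝ)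
    (hZm : ∀ j, Measurable (Z j)) (hNm : Measurable N)
    (hindep : iIndepFun
      (fun o : Option ℕ => Option.elim o N (fun j => Z j)) μ)
    (hZdist : ∀ j, μ.map (Z j) = chiMeasure k)
    (hNdist : μ.map N = gaussianReal 0 (σ ^ 2))
    (α : ℝ) (hα : 1 < α) :
    ∃ (c : ℕ) (g : Fin (c + 1) → ℝ), (∀ j, g j ≠ 0) ∧
      (∫⁻ x,
          ((Measure.map
              (fun ω => (∑ j : Fin (c + 1), (Real.sqrt k / (|g j| * Z j ω)) * g j) + N ω)
              μ).rnDeriv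
            (Measure.map
              (fun ω => (∑ j : Fin c, (Real.sqrt k / (|g j.castSucc| * Z j ω)) * g j.castSucc)
                + N ω) μ) x) ^ α
        ∂(Measure.map
            (fun ω => (∑ j : Fin c, (Real.sqrt k / (|g j.castSucc| * Z j ω)) * g j.castSucc)
              + N ω) μ)) = ⊤ := by
  have hv : (σ ^ 2 : NNReal) ≠ 0 := pow_ne_zero 2 hσ.ne'
  refine ⟨0, fun _ => 1, fun j => one_ne_zero, ?_⟩
  have hZN : IndepFun (Z 0) N μ := hindep.indepFun (i := some 0) (j := none) (by simp)
  simp only [Fin.sum_univ_zero, Fin.sum_univ_succ, add_zero, zero_add, abs_one, one_mul, mul_one,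
    Fin.val_zero]
  exact aux_main μ k hk (σ ^ 2) hv (Z 0) N (hZm 0) hNm hZN (hZdist 0) hNdist α hα
end

section
/- If X ⪰_st Y ≥ 0 (first-order stochastic dominance), then the tradeoff function satisfies T(X, N(X,1) ‖ X, N(0,1)) ⪯ T(Y, N(Y,1) ‖ Y, N(0,1)); that is, a stochastically larger shift yields a pointwise smaller (weaker) tradeoff curve. -/
open MeasureTheory ProbabilityTheory

/-- The tradeoff function `T(P‖Q)(α)`: the infimum over measurable tests `φ : E → [0,1]` with
type-I error `∫ φ dP ≤ α` of the type-II error `1 − ∫ φ dQ`. -/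
noncomputable def tradeoff {E : Type*} [MeasurableSpace E] (P Q : Measure E) (α : ℝ) : ℝ :=
  sInf {r : ℝ | ∃ φ : E → ℝ, Measurable φ ∧ (∀ x, φ x ∈ Set.Icc (0 : ℝ) 1) ∧
    (∫ x, φ x ∂P) ≤ α ∧ r = 1 - ∫ x, φ x ∂Q}

open Set Filter Topology
open scoped ENNReal NNReal

noncomputable section
namespace TA

def Phi : ℝ → ℝ := fun x => cdf (gaussianReal 0 1) x

lemma Phi_mono : Monotone Phi := monotone_cdf _
lemma Phi_meas : Measurable Phi := Phi_mono.measurable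
lemma Phi_le_one (x : ℝ) : Phi x ≤ 1 := cdf_le_one _ x
lemma ofReal_Phi (x : ℝ) : ENNReal.ofReal (Phi x) = gaussianReal 0 1 (Iic x) := ofReal_cdf _ x

lemma Phi_pos (x : ℝ) : 0 < Phi x := by
  rcases lt_or_eq_of_le (cdf_nonneg (gaussianReal 0 1) x) with h | h
  · exact h
  · exfalso
    have h0 : gaussianReal 0 1 (Iic x) = 0 := by
      rw [← ofReal_Phi]; unfold Phi; rw [← h]; simp
    have := gaussianReal_absolutelyContinuous' 0 (v := 1) (by norm_num) h0
    simp [Real.volume_Iic] at this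

lemma Phi_lt_one (x : ℝ) : Phi x < 1 := by
  rcases lt_or_eq_of_le (Phi_le_one x) with h | h
  · exact h
  · exfalso
    have h0 : gaussianReal 0 1 (Ioi x) = 0 := by
      have h1 : gaussianReal 0 1 (Iic x) = 1 := by
        rw [← ofReal_Phi, h]; simp
      have hc : gaussianReal 0 1 (Iic x)ᶜ = 1 - gaussianReal 0 1 (Iic x) := by
        rw [measure_compl measurableSet_Iic (measure_ne_top _ _), measure_univ]
      rw [h1] at hc
      simpa [compl_Iic] using hc
    have := gaussianReal_absolutelyContinuous' 0 (v := 1) (by norm_num) h0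
    simp [Real.volume_Ioi] at this

lemma Phi_continuous : Continuous Phi := by
  rw [continuous_iff_continuousAt]
  intro x
  have hsing : (gaussianReal 0 1) {x} = 0 :=
    gaussianReal_absolutelyContinuous 0 (v := 1) (by norm_num) (measure_singleton x)
  have hmeas : (cdf (gaussianReal 0 1)).measure = gaussianReal 0 1 := measure_cdf _
  have h1 : (cdf (gaussianReal 0 1)).measure {x} = 0 := by rw [hmeas]; exact hsing
  rw [StieltjesFunction.measure_singleton] at h1
  have hll : Function.leftLim (cdf (gaussianReal 0 1)) x = cdf (gaussianReal 0 1) x := by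
    have hle := Monotone.leftLim_le (monotone_cdf (gaussianReal 0 1)) (le_refl x)
    have : cdf (gaussianReal 0 1) x - Function.leftLim (cdf (gaussianReal 0 1)) x ≤ 0 := by
      by_contra h
      push_neg at h
      exact absurd h1 (by simp [ENNReal.ofReal_eq_zero]; linarith)
    linarith
  exact (monotone_cdf (gaussianReal 0 1)).continuousAt_iff_leftLim_eq_rightLim.mpr
    (by rw [hll, StieltjesFunction.rightLim_eq])
lemma Phi_tendsto_atBot : Tendsto Phi atBot (𝓝 0) := tendsto_cdf_atBot _
lemma Phi_tendsto_atTop : Tendsto Phi atTop (𝓝 1) := tendsto_cdf_atTop _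

/-- characterization of sublevel sets of Phi for b in (0,1) -/
lemma exists_c (b : ℝ) (hb : b ∈ Ioo (0:ℝ) 1) :
    ∃ c : ℝ, Phi c = b ∧ {g : ℝ | Phi g ≤ b} = Iic c := by
  set A := {g : ℝ | Phi g ≤ b} with hA
  have hAcl : IsClosed A := isClosed_le Phi_continuous continuous_const
  have hAne : A.Nonempty := by
    obtain ⟨g, hg⟩ := (Phi_tendsto_atBot.eventually_lt_const hb.1).exists
    exact ⟨g, le_of_lt hg⟩
  have hAbdd : BddAbove A := by
    obtain ⟨x₀, hx₀⟩ := (Phi_tendsto_atTop.eventually_const_lt hb.2).exists_forall_of_atTop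
    refine ⟨x₀, fun g hg => ?_⟩
    by_contra hgt
    push_neg at hgt
    exact absurd (hx₀ g hgt.le) (not_lt.mpr hg)
  set c := sSup A with hc
  have hcA : c ∈ A := hAcl.csSup_mem hAne hAbdd
  have hsub : A = Iic c := by
    apply Subset.antisymm
    · exact fun g hg => le_csSup hAbdd hg
    · exact fun g hg => le_trans (Phi_mono hg) hcA
  refine ⟨c, ?_, hsub⟩
  by_contra hne
  have hlt : Phi c < b := lt_of_le_of_ne hcA hne
  have hev : ∀ᶠ g in 𝓝 c, Phi g < b :=
    Phi_continuous.continuousAt.eventually_lt_const hlt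
  have hev2 : ∀ᶠ g in 𝓝[>] c, Phi g < b ∧ g ∈ Ioi c :=
    (hev.filter_mono nhdsWithin_le_nhds).and self_mem_nhdsWithin
  obtain ⟨g, hg1, hg2⟩ := hev2.exists
  exact absurd (le_csSup hAbdd (le_of_lt hg1 : Phi g ≤ b)) (not_le.mpr hg2)

lemma measure_sublevel (b : ℝ) :
    gaussianReal 0 1 {g : ℝ | Phi g ≤ b} = ENNReal.ofReal (min b 1) := by
  rcases le_or_gt b 0 with hb | hb
  · have : {g : ℝ | Phi g ≤ b} = ∅ := by
      ext g; simp only [mem_setOf_eq, mem_empty_iff_false, iff_false, not_le]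
      exact lt_of_le_of_lt hb (Phi_pos g)
    rw [this]
    have : min b 1 ≤ 0 := min_le_of_left_le hb
    rw [ENNReal.ofReal_of_nonpos this]; simp
  rcases lt_or_ge b 1 with hb1 | hb1
  · obtain ⟨c, hc1, hc2⟩ := exists_c b ⟨hb, hb1⟩
    rw [hc2, ← ofReal_Phi, hc1, min_eq_left hb1.le]
  · have : {g : ℝ | Phi g ≤ b} = univ := by
      ext g; simp only [mem_setOf_eq, mem_univ, iff_true]
      exact le_trans (Phi_le_one g) hb1
    rw [this, min_eq_right hb1]
    simp

/-- the power function: measure of the shifted sublevel set -/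
def pw (b δ : ℝ) : ℝ := (gaussianReal 0 1 {g : ℝ | Phi (g - δ) ≤ b}).toReal

lemma pw_nonneg (b δ : ℝ) : 0 ≤ pw b δ := ENNReal.toReal_nonneg

lemma pw_le_one (b δ : ℝ) : pw b δ ≤ 1 := by
  rw [pw]
  refine ENNReal.toReal_le_of_le_ofReal zero_le_one ?_
  simpa using prob_le_one

lemma pw_mono (b : ℝ) {δ δ' : ℝ} (h : δ ≤ δ') : pw b δ ≤ pw b δ' := by
  refine ENNReal.toReal_mono (measure_ne_top _ _) (measure_mono fun g hg => ?_)
  exact le_trans (Phi_mono (by linarith)) hg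

lemma pw_zero (b : ℝ) (hb : b ∈ Icc (0:ℝ) 1) : pw b 0 = b := by
  rw [pw]
  simp only [sub_zero]
  rw [measure_sublevel, min_eq_left hb.2, ENNReal.toReal_ofReal hb.1]

lemma measurable_pw_pair : Measurable fun p : ℝ × ℝ => pw p.1 p.2 := by
  have hT : MeasurableSet {q : (ℝ × ℝ) × ℝ | Phi (q.2 - q.1.2) ≤ q.1.1} := by
    exact measurableSet_le (Phi_meas.comp (measurable_snd.sub (measurable_snd.comp measurable_fst)))
      (measurable_fst.comp measurable_fst)
  have := Kernel.measurable_kernel_prodMk_left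
    (κ := Kernel.const (ℝ × ℝ) (gaussianReal 0 1)) hT
  have h2 : Measurable fun p : ℝ × ℝ => gaussianReal 0 1 {g : ℝ | Phi (g - p.2) ≤ p.1} := by
    simpa [Kernel.const_apply, Set.preimage] using this
  exact h2.ennreal_toReal
/-- integrability of bounded measurable functions on finite measures -/
lemma integrable01 {α : Type*} [MeasurableSpace α] {P : Measure α} [IsFiniteMeasure P]
    {f : α → ℝ} (hm : AEStronglyMeasurable f P) (h01 : ∀ x, f x ∈ Icc (0:ℝ) 1) :
    Integrable f P := by
  refine Integrable.mono' (integrable_const 1) hm ?_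
  exact ae_of_all _ fun x => by
    rw [Real.norm_eq_abs, abs_le]; exact ⟨by linarith [(h01 x).1], (h01 x).2⟩

lemma integral_le_one {α : Type*} [MeasurableSpace α] {P : Measure α} [IsProbabilityMeasure P]
    {f : α → ℝ} (h01 : ∀ x, f x ∈ Icc (0:ℝ) 1) : ∫ x, f x ∂P ≤ 1 := by
  rcases (em (Integrable f P)) with hi | hi
  · calc ∫ x, f x ∂P ≤ ∫ _x, (1:ℝ) ∂P :=
      integral_mono hi (integrable_const 1) fun x => (h01 x).2
    _ = 1 := by simp
  · rw [integral_undef hi]; norm_num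

lemma integral_nonneg01 {α : Type*} [MeasurableSpace α] {P : Measure α}
    {f : α → ℝ} (h01 : ∀ x, f x ∈ Icc (0:ℝ) 1) : 0 ≤ ∫ x, f x ∂P :=
  integral_nonneg fun x => (h01 x).1

/-- integral against gaussian = integral against pdf -/
lemma integral_gaussian_pdf (m : ℝ) {f : ℝ → ℝ} (hm : Measurable f) :
    ∫ w, f w ∂(gaussianReal m 1) = ∫ w, gaussianPDFReal m 1 w * f w := by
  rw [gaussianReal_of_var_ne_zero m (by norm_num), gaussianPDF_def]
  have : (fun w => ENNReal.ofReal (gaussianPDFReal m 1 w))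
      = (fun w => ((Real.toNNReal (gaussianPDFReal m 1 w) : ℝ≥0) : ℝ≥0∞)) := rfl
  rw [this]
  rw [integral_withDensity_eq_integral_smul (by
    exact (measurable_gaussianPDFReal m 1).real_toNNReal) f]
  congr 1
  ext w
  simp [NNReal.smul_def, Real.coe_toNNReal _ (gaussianPDFReal_nonneg m 1 w)]

/-- Neyman-Pearson for the Gaussian shift family -/
lemma np {y : ℝ} (hy : 0 ≤ y) {φ0 : ℝ → ℝ} (hm : Measurable φ0)
    (h01 : ∀ w, φ0 w ∈ Icc (0:ℝ) 1) {b : ℝ} (hbdef : b = ∫ g, φ0 (y + g) ∂(gaussianReal 0 1)) :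
    ∫ w, φ0 w ∂(gaussianReal 0 1) ≤ pw b y := by
  have hmap : (gaussianReal 0 1).map (y + ·) = gaussianReal y 1 := by
    simpa using gaussianReal_map_const_add (μ := 0) (v := 1) y
  have hb' : b = ∫ w, φ0 w ∂(gaussianReal y 1) := by
    rw [hbdef, ← hmap, integral_map (by fun_prop) hm.aestronglyMeasurable]
  have hb01 : b ∈ Icc (0:ℝ) 1 := by
    rw [hb']; exact ⟨integral_nonneg01 h01, integral_le_one h01⟩
  rcases le_or_gt 1 b with hb1 | hblt
  · -- b = 1 : pw b y = 1
    have : {g : ℝ | Phi (g - y) ≤ b} = univ := by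
      ext g; simp only [mem_setOf_eq, mem_univ, iff_true]
      exact le_trans (Phi_le_one _) hb1
    have : pw b y = 1 := by rw [pw, this]; simp
    rw [this]; exact integral_le_one h01
  rcases le_or_gt b 0 with hb0 | hbpos
  · -- b = 0 : φ0 = 0 a.e.
    have hb0' : b = 0 := le_antisymm hb0 hb01.1
    have hint : Integrable φ0 (gaussianReal y 1) := integrable01 hm.aestronglyMeasurable h01
    have hzero : φ0 =ᵐ[gaussianReal y 1] 0 := by
      rw [← integral_eq_zero_iff_of_nonneg (fun x => (h01 x).1) hint, ← hb', hb0']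
    have hN : gaussianReal y 1 {w | φ0 w ≠ 0} = 0 := by
      rw [Filter.EventuallyEq, ae_iff] at hzero; simpa using hzero
    have hvol : volume {w | φ0 w ≠ 0} = 0 :=
      gaussianReal_absolutelyContinuous' y (by norm_num) hN
    have hN0 : gaussianReal 0 1 {w | φ0 w ≠ 0} = 0 :=
      gaussianReal_absolutelyContinuous 0 (by norm_num) hvol
    have hzero0 : φ0 =ᵐ[gaussianReal 0 1] 0 := by
      rw [Filter.EventuallyEq, ae_iff]
      simpa using hN0
    rw [integral_congr_ae hzero0]
    simpa using pw_nonneg b y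
  -- main case
  obtain ⟨c, hc1, hc2⟩ := exists_c b ⟨hbpos, hblt⟩
  have hS : {w : ℝ | Phi (w - y) ≤ b} = Iic (c + y) := by
    ext w
    simp only [mem_setOf_eq, mem_Iic]
    constructor
    · intro h
      have h2 : w - y ∈ {g : ℝ | Phi g ≤ b} := h
      rw [hc2] at h2
      have : w - y ≤ c := h2
      linarith
    · intro h
      have h2 : w - y ∈ Iic c := by simp only [mem_Iic]; linarith
      rw [← hc2] at h2; exact h2
  set t : ℝ → ℝ := (Iic (c + y)).indicator (fun _ => (1:ℝ)) with ht
  have htm : Measurable t := measurable_const.indicator measurableSet_Iic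
  have ht01 : ∀ w, t w ∈ Icc (0:ℝ) 1 := fun w => by
    rw [ht]; unfold Set.indicator; split <;> simp
  -- size of t under gaussianReal y 1 is b
  have hts : ∫ w, t w ∂(gaussianReal y 1) = b := by
    rw [ht, integral_indicator_const _ measurableSet_Iic, smul_eq_mul, mul_one, measureReal_def, ← hmap,
      Measure.map_apply (by fun_prop) measurableSet_Iic]
    have : (y + ·) ⁻¹' (Iic (c + y)) = Iic c := by
      ext w; simp only [mem_preimage, mem_Iic]; constructor <;> intro h <;> linarith
    rw [this, ← ofReal_Phi, hc1, ENNReal.toReal_ofReal hbpos.le]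
  -- power of t under gaussianReal 0 1 is pw b y
  have htp : ∫ w, t w ∂(gaussianReal 0 1) = pw b y := by
    rw [ht, integral_indicator_const _ measurableSet_Iic, smul_eq_mul, mul_one, pw, hS, measureReal_def]
  rw [← htp]
  -- NP inequality
  set k : ℝ := Real.exp (y^2/2 - y*(c+y)) with hk
  have hratio : ∀ w, gaussianPDFReal 0 1 w = gaussianPDFReal y 1 w * Real.exp (y^2/2 - y*w) := by
    intro w
    simp only [gaussianPDFReal, NNReal.coe_one]
    have hexp : Real.exp (-(w - y)^2/(2*1)) * Real.exp (y^2/2 - y*w)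
        = Real.exp (-(w - 0)^2/(2*1)) := by
      rw [← Real.exp_add]; congr 1; ring
    rw [← hexp]; ring
  have hpoint : ∀ w, (φ0 w - t w) * gaussianPDFReal 0 1 w
      ≤ k * ((φ0 w - t w) * gaussianPDFReal y 1 w) := by
    intro w
    rcases le_or_gt w (c + y) with hw | hw
    · have htw : t w = 1 := by rw [ht]; simp [mem_Iic, hw]
      have hd : φ0 w - t w ≤ 0 := by rw [htw]; linarith [(h01 w).2]
      have hek : k ≤ Real.exp (y^2/2 - y*w) := by
        apply Real.exp_le_exp.mpr
        nlinarith [mul_le_mul_of_nonneg_left hw hy]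
      rw [hratio w]
      calc (φ0 w - t w) * (gaussianPDFReal y 1 w * Real.exp (y^2/2 - y*w))
          ≤ (φ0 w - t w) * (gaussianPDFReal y 1 w * k) := by
            apply mul_le_mul_of_nonpos_left _ hd
            exact mul_le_mul_of_nonneg_left hek (gaussianPDFReal_nonneg y 1 w)
        _ = k * ((φ0 w - t w) * gaussianPDFReal y 1 w) := by ring
    · have htw : t w = 0 := by
        rw [ht]; apply indicator_of_notMem; simp only [mem_Iic]; linarith
      have hd : 0 ≤ φ0 w - t w := by rw [htw]; linarith [(h01 w).1]
      have hek : Real.exp (y^2/2 - y*w) ≤ k := by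
        apply Real.exp_le_exp.mpr
        nlinarith [mul_le_mul_of_nonneg_left hw.le hy]
      rw [hratio w]
      calc (φ0 w - t w) * (gaussianPDFReal y 1 w * Real.exp (y^2/2 - y*w))
          ≤ (φ0 w - t w) * (gaussianPDFReal y 1 w * k) := by
            apply mul_le_mul_of_nonneg_left _ hd
            exact mul_le_mul_of_nonneg_left hek (gaussianPDFReal_nonneg y 1 w)
        _ = k * ((φ0 w - t w) * gaussianPDFReal y 1 w) := by ring
  -- integrate
  have hbdd : ∃ C, ∀ w, ‖φ0 w - t w‖ ≤ C := by
    refine ⟨1, fun w => ?_⟩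
    rw [Real.norm_eq_abs, abs_le]
    constructor <;> [linarith [(h01 w).1, (ht01 w).2]; linarith [(h01 w).2, (ht01 w).1]]
  have hiq : Integrable (fun w => (φ0 w - t w) * gaussianPDFReal 0 1 w) volume :=
    (integrable_gaussianPDFReal 0 1).bdd_mul ((hm.sub htm).aestronglyMeasurable) (ae_of_all _ hbdd.choose_spec)
  have hip : Integrable (fun w => (φ0 w - t w) * gaussianPDFReal y 1 w) volume :=
    (integrable_gaussianPDFReal y 1).bdd_mul ((hm.sub htm).aestronglyMeasurable) (ae_of_all _ hbdd.choose_spec)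
  have hI : ∫ w, (φ0 w - t w) * gaussianPDFReal 0 1 w
      ≤ k * ∫ w, (φ0 w - t w) * gaussianPDFReal y 1 w := by
    rw [← integral_const_mul]
    exact integral_mono hiq (hip.const_mul k) hpoint
  have hgy : ∫ w, (φ0 w - t w) * gaussianPDFReal y 1 w = 0 := by
    have h1 : ∫ w, (φ0 w - t w) * gaussianPDFReal y 1 w
        = ∫ w, gaussianPDFReal y 1 w * φ0 w - gaussianPDFReal y 1 w * t w := by
      congr 1; ext w; ring
    rw [h1, integral_sub ((integrable_gaussianPDFReal y 1).bdd_mul hm.aestronglyMeasurable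
        (ae_of_all _ fun w => by rw [Real.norm_eq_abs, abs_le]; exact ⟨by linarith [(h01 w).1], (h01 w).2⟩)
        |>.congr (ae_of_all _ fun w => by ring))
      ((integrable_gaussianPDFReal y 1).bdd_mul htm.aestronglyMeasurable
        (ae_of_all _ fun w => by rw [Real.norm_eq_abs, abs_le]; exact ⟨by linarith [(ht01 w).1], (ht01 w).2⟩)
        |>.congr (ae_of_all _ fun w => by ring))]
    rw [← integral_gaussian_pdf y hm, ← integral_gaussian_pdf y htm, ← hb', hts]
    ring
  have hg0 : ∫ w, (φ0 w - t w) * gaussianPDFReal 0 1 w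
      = ∫ w, φ0 w ∂(gaussianReal 0 1) - ∫ w, t w ∂(gaussianReal 0 1) := by
    have h1 : ∫ w, (φ0 w - t w) * gaussianPDFReal 0 1 w
        = ∫ w, gaussianPDFReal 0 1 w * φ0 w - gaussianPDFReal 0 1 w * t w := by
      congr 1; ext w; ring
    rw [h1, integral_sub ((integrable_gaussianPDFReal 0 1).bdd_mul hm.aestronglyMeasurable
        (ae_of_all _ fun w => by rw [Real.norm_eq_abs, abs_le]; exact ⟨by linarith [(h01 w).1], (h01 w).2⟩)
        |>.congr (ae_of_all _ fun w => by ring))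
      ((integrable_gaussianPDFReal 0 1).bdd_mul htm.aestronglyMeasurable
        (ae_of_all _ fun w => by rw [Real.norm_eq_abs, abs_le]; exact ⟨by linarith [(ht01 w).1], (ht01 w).2⟩)
        |>.congr (ae_of_all _ fun w => by ring))]
    rw [← integral_gaussian_pdf 0 hm, ← integral_gaussian_pdf 0 htm]
  rw [hg0, hgy, mul_zero] at hI
  linarith
/-- quantile function (patched to 0 outside (0,1)) -/
def qf (ν : Measure ℝ) : ℝ → ℝ :=
  fun u => if u ∈ Ioo (0:ℝ) 1 then sInf {x | u ≤ cdf ν x} else 0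

variable (ν : Measure ℝ) [IsProbabilityMeasure ν]

lemma qf_set_nonempty {u : ℝ} (hu : u < 1) : {x | u ≤ cdf ν x}.Nonempty := by
  obtain ⟨x, hx⟩ := ((tendsto_cdf_atTop ν).eventually_const_lt hu).exists
  exact ⟨x, hx.le⟩

lemma qf_set_bddBelow {u : ℝ} (hu : 0 < u) : BddBelow {x | u ≤ cdf ν x} := by
  obtain ⟨x₀, hx₀⟩ := ((tendsto_cdf_atBot ν).eventually_lt_const hu).exists_forall_of_atBot
  refine ⟨x₀, fun z hz => ?_⟩
  by_contra h
  push_neg at h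
  exact absurd hz (not_le.mpr (hx₀ z h.le))

lemma qf_galois {u : ℝ} (hu : u ∈ Ioo (0:ℝ) 1) (x : ℝ) :
    qf ν u ≤ x ↔ u ≤ cdf ν x := by
  rw [qf, if_pos hu]
  constructor
  · intro h
    -- first : u ≤ cdf ν (sInf S)
    set c := sInf {x | u ≤ cdf ν x} with hc
    have hcdfc : u ≤ cdf ν c := by
      have htd : Tendsto (cdf ν) (𝓝[>] c) (𝓝 (cdf ν c)) :=
        ((cdf ν).right_continuous c).tendsto.mono_left
          (nhdsWithin_mono c Ioi_subset_Ici_self)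
      refine ge_of_tendsto htd ?_
      filter_upwards [self_mem_nhdsWithin] with z hz
      obtain ⟨w, hw1, hw2⟩ := (csInf_lt_iff (qf_set_bddBelow ν hu.1)
        (qf_set_nonempty ν hu.2)).mp (hz : c < z)
      exact le_trans hw1 (monotone_cdf ν hw2.le)
    exact le_trans hcdfc (monotone_cdf ν h)
  · intro h
    exact csInf_le (qf_set_bddBelow ν hu.1) h

lemma qf_measurable : Measurable (qf ν) := by
  apply measurable_of_Iic
  intro t
  have : qf ν ⁻¹' Iic t =
      (Ioo (0:ℝ) 1 ∩ Iic (cdf ν t)) ∪ ((Ioo (0:ℝ) 1)ᶜ ∩ {u : ℝ | (0:ℝ) ≤ t}) := by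
    ext u
    simp only [mem_preimage, mem_Iic, mem_union, mem_inter_iff, mem_compl_iff, mem_setOf_eq]
    by_cases hu : u ∈ Ioo (0:ℝ) 1
    · simp only [hu, true_and, not_true_eq_false, false_and, or_false]
      exact qf_galois ν hu t
    · simp only [hu, false_and, false_or, not_false_eq_true, true_and]
      rw [qf, if_neg hu]
  rw [this]
  refine MeasurableSet.union (measurableSet_Ioo.inter measurableSet_Iic) ?_
  rcases le_or_gt 0 t with h | h
  · have : {u : ℝ | (0:ℝ) ≤ t} = univ := eq_univ_of_forall fun _ => h
    rw [this]; exact measurableSet_Ioo.compl.inter MeasurableSet.univ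
  · have : {u : ℝ | (0:ℝ) ≤ t} = ∅ := eq_empty_of_forall_notMem fun _ => not_le.mpr h
    rw [this]; exact measurableSet_Ioo.compl.inter (MeasurableSet.empty)

lemma qf_map : (volume.restrict (Ioo (0:ℝ) 1)).map (qf ν) = ν := by
  haveI : IsProbabilityMeasure (volume.restrict (Ioo (0:ℝ) 1)) :=
    ⟨by simp [Real.volume_Ioo]⟩
  haveI : IsProbabilityMeasure ((volume.restrict (Ioo (0:ℝ) 1)).map (qf ν)) :=
    Measure.isProbabilityMeasure_map (qf_measurable ν).aemeasurable
  refine MeasureTheory.Measure.ext_of_Iic _ _ fun x => ?_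
  rw [Measure.map_apply (qf_measurable ν) measurableSet_Iic,
    Measure.restrict_apply ((qf_measurable ν) measurableSet_Iic)]
  have hset : qf ν ⁻¹' Iic x ∩ Ioo 0 1 = Iic (cdf ν x) ∩ Ioo 0 1 := by
    ext u
    simp only [mem_inter_iff, mem_preimage, mem_Iic]
    constructor
    · rintro ⟨h1, h2⟩; exact ⟨(qf_galois ν h2 x).mp h1, h2⟩
    · rintro ⟨h1, h2⟩; exact ⟨(qf_galois ν h2 x).mpr h1, h2⟩
  rw [hset, ← ofReal_cdf ν x]
  have h0 : 0 ≤ cdf ν x := cdf_nonneg ν x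
  have h1 : cdf ν x ≤ 1 := cdf_le_one ν x
  have hub : volume (Iic (cdf ν x) ∩ Ioo 0 1) ≤ ENNReal.ofReal (cdf ν x) := by
    have hsub : Iic (cdf ν x) ∩ Ioo 0 1 ⊆ Ioc 0 (cdf ν x) := by
      rintro u ⟨hu1, hu2⟩
      exact ⟨hu2.1, hu1⟩
    calc volume (Iic (cdf ν x) ∩ Ioo 0 1) ≤ volume (Ioc 0 (cdf ν x)) := measure_mono hsub
    _ = ENNReal.ofReal (cdf ν x) := by rw [Real.volume_Ioc, sub_zero]
  have hlb : ENNReal.ofReal (cdf ν x) ≤ volume (Iic (cdf ν x) ∩ Ioo 0 1) := by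
    have hsub : Ioo 0 (cdf ν x) ⊆ Iic (cdf ν x) ∩ Ioo 0 1 := by
      rintro u ⟨hu1, hu2⟩
      exact ⟨hu2.le, hu1, lt_of_lt_of_le hu2 h1⟩
    calc ENNReal.ofReal (cdf ν x) = volume (Ioo 0 (cdf ν x)) := by
          rw [Real.volume_Ioo, sub_zero]
    _ ≤ volume (Iic (cdf ν x) ∩ Ioo 0 1) := measure_mono hsub
  exact le_antisymm hub hlb

lemma qf_mono_compare (νX νY : Measure ℝ) [IsProbabilityMeasure νX] [IsProbabilityMeasure νY]
    (hst : ∀ t, cdf νX t ≤ cdf νY t) (u : ℝ) : qf νY u ≤ qf νX u := by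
  by_cases hu : u ∈ Ioo (0:ℝ) 1
  · rw [qf, qf, if_pos hu, if_pos hu]
    exact csInf_le_csInf (qf_set_bddBelow νY hu.1) (qf_set_nonempty νX hu.2)
      (fun x hx => le_trans hx (hst x))
  · rw [qf, qf, if_neg hu, if_neg hu]

/-- Fubini-type swap for the randomized threshold test -/
lemma swap_int (ρ : Measure ℝ) [IsProbabilityMeasure ρ] (x : ℝ) :
    ∫ g, (ρ {b : ℝ | Phi (g - x) ≤ b}).toReal ∂(gaussianReal 0 1) = ∫ b, pw b x ∂ρ := by
  set W : Set (ℝ × ℝ) := {p : ℝ × ℝ | Phi (p.1 - x) ≤ p.2} with hW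
  have hWm : MeasurableSet W :=
    measurableSet_le (Phi_meas.comp (measurable_fst.sub measurable_const)) measurable_snd
  have hm1 : Measurable fun g => ρ (Prod.mk g ⁻¹' W) := measurable_measure_prodMk_left hWm
  have hm2 : Measurable fun b => (gaussianReal 0 1) ((fun g => (g, b)) ⁻¹' W) :=
    measurable_measure_prodMk_right hWm
  have hL : ∫ g, (ρ {b : ℝ | Phi (g - x) ≤ b}).toReal ∂(gaussianReal 0 1)
      = (((gaussianReal 0 1).prod ρ) W).toReal := by
    rw [Measure.prod_apply hWm]
    have : ∀ g : ℝ, {b : ℝ | Phi (g - x) ≤ b} = Prod.mk g ⁻¹' W := fun g => rfl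
    simp_rw [this]
    rw [← integral_toReal hm1.aemeasurable
      (ae_of_all _ fun g => lt_of_le_of_lt prob_le_one ENNReal.one_lt_top)]
  have hR : ∫ b, pw b x ∂ρ = (((gaussianReal 0 1).prod ρ) W).toReal := by
    rw [Measure.prod_apply_symm hWm]
    have : ∀ b : ℝ, {g : ℝ | Phi (g - x) ≤ b} = (fun g => (g, b)) ⁻¹' W := fun b => rfl
    rw [← integral_toReal hm2.aemeasurable
      (ae_of_all _ fun b => lt_of_le_of_lt prob_le_one ENNReal.one_lt_top)]
    unfold pw
    simp_rw [this]
  rw [hL, hR]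

set_option maxHeartbeats 2000000 in
/-- Key construction: transfer a test for the Y-pair to a test for the X-pair. -/
lemma key (νX νY : Measure ℝ) [IsProbabilityMeasure νX] [IsProbabilityMeasure νY]
    (hY0 : ∀ᵐ y ∂νY, 0 ≤ y) (hst : ∀ t, cdf νX t ≤ cdf νY t)
    (φ : ℝ × ℝ → ℝ) (hφm : Measurable φ) (hφ01 : ∀ p, φ p ∈ Icc (0:ℝ) 1) :
    ∃ ψ : ℝ × ℝ → ℝ, Measurable ψ ∧ (∀ p, ψ p ∈ Icc (0:ℝ) 1) ∧
      (∫ x, ∫ g, ψ (x, x + g) ∂(gaussianReal 0 1) ∂νX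
        ≤ ∫ y, ∫ g, φ (y, y + g) ∂(gaussianReal 0 1) ∂νY) ∧
      (∫ y, ∫ g, φ (y, g) ∂(gaussianReal 0 1) ∂νY
        ≤ ∫ x, ∫ g, ψ (x, g) ∂(gaussianReal 0 1) ∂νX) := by
  set γ0 : Measure ℝ := gaussianReal 0 1 with hγ0
  set μ' : Measure ℝ := volume.restrict (Ioo (0:ℝ) 1) with hμ'
  haveI : IsProbabilityMeasure μ' := ⟨by simp [hμ', Real.volume_Ioo]⟩
  set X' : ℝ → ℝ := qf νX with hX'
  set Y' : ℝ → ℝ := qf νY with hY'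
  have hX'm : Measurable X' := qf_measurable νX
  have hY'm : Measurable Y' := qf_measurable νY
  have hXmap : μ'.map X' = νX := qf_map νX
  have hYmap : μ'.map Y' = νY := qf_map νY
  set h₁ : ℝ → ℝ := fun y => ∫ g, φ (y, y + g) ∂γ0 with hh₁
  set h₀ : ℝ → ℝ := fun y => ∫ g, φ (y, g) ∂γ0 with hh₀
  have hφ'm : Measurable fun p : ℝ × ℝ => φ (p.1, p.1 + p.2) :=
    hφm.comp (measurable_fst.prodMk (measurable_fst.add measurable_snd))
  have hh₁m : Measurable h₁ :=
    (hφ'm.stronglyMeasurable.integral_prod_right').measurable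
  have hh₀m : Measurable h₀ :=
    (hφm.stronglyMeasurable.integral_prod_right').measurable
  have hh₁01 : ∀ y, h₁ y ∈ Icc (0:ℝ) 1 := fun y =>
    ⟨integral_nonneg01 fun g => hφ01 _, integral_le_one fun g => hφ01 _⟩
  set B : ℝ → ℝ := fun u => h₁ (Y' u) with hB
  have hBm : Measurable B := hh₁m.comp hY'm
  set κ := condDistrib B X' μ' with hκ
  set ρ : Measure (ℝ × ℝ) := μ'.map (fun u => (X' u, B u)) with hρdef
  haveI : IsProbabilityMeasure ρ :=
    Measure.isProbabilityMeasure_map (hX'm.prodMk hBm).aemeasurable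
  have hρ : (μ'.map X') ⊗ₘ κ = ρ := by
    rw [hκ, condDistrib_def, ← Measure.fst_map_prodMk (X := X') (μ := μ') hBm]
    exact Measure.disintegrate ρ ρ.condKernel
  set ψ : ℝ × ℝ → ℝ := fun p => (κ p.1 {b : ℝ | Phi (p.2 - p.1) ≤ b}).toReal with hψ
  -- measurability of ψ
  have hT : MeasurableSet {q : (ℝ × ℝ) × ℝ | Phi (q.1.2 - q.1.1) ≤ q.2} :=
    measurableSet_le (Phi_meas.comp ((measurable_snd.comp measurable_fst).sub
      (measurable_fst.comp measurable_fst))) measurable_snd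
  have hψm : Measurable ψ := by
    have := Kernel.measurable_kernel_prodMk_left
      (κ := κ.comap Prod.fst measurable_fst) hT
    have h2 : Measurable fun p : ℝ × ℝ => κ p.1 {b : ℝ | Phi (p.2 - p.1) ≤ b} := by
      simpa [Kernel.comap_apply, Set.preimage] using this
    exact h2.ennreal_toReal
  have hψ01 : ∀ p, ψ p ∈ Icc (0:ℝ) 1 := fun p =>
    ⟨ENNReal.toReal_nonneg, ENNReal.toReal_le_of_le_ofReal zero_le_one (by simpa using prob_le_one)⟩
  -- measurable helper functions
  have hm1 : Measurable fun p : ℝ × ℝ => pw p.2 0 :=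
    measurable_pw_pair.comp (measurable_snd.prodMk measurable_const)
  have hm2 : Measurable fun p : ℝ × ℝ => pw p.2 p.1 :=
    measurable_pw_pair.comp (measurable_snd.prodMk measurable_fst)
  have hm3 : Measurable fun y : ℝ => pw (h₁ y) y :=
    measurable_pw_pair.comp (hh₁m.prodMk measurable_id)
  have hm4 : Measurable fun u : ℝ => pw (B u) (X' u) :=
    measurable_pw_pair.comp (hBm.prodMk hX'm)
  have hm5 : Measurable fun u : ℝ => pw (B u) (Y' u) :=
    measurable_pw_pair.comp (hBm.prodMk hY'm)
  have hnp : ∀ y : ℝ, 0 ≤ y → h₀ y ≤ pw (h₁ y) y := by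
    intro y hy
    exact np hy (hφm.comp (measurable_const.prodMk measurable_id)) (fun w => hφ01 _) rfl
  refine ⟨ψ, hψm, hψ01, ?_, ?_⟩
  · -- size
    have hper : ∀ x : ℝ, ∫ g, ψ (x, x + g) ∂γ0 = ∫ b, pw b 0 ∂(κ x) := by
      intro x
      have h1 : (fun g => ψ (x, x + g))
          = fun g => ((κ x) {b : ℝ | Phi (g - 0) ≤ b}).toReal := by
        funext g
        have : x + g - x = g - 0 := by ring
        simp only [hψ, this]
      rw [h1]
      exact swap_int (κ x) 0
    have hint1 : Integrable (fun p : ℝ × ℝ => pw p.2 0) ((μ'.map X') ⊗ₘ κ) := by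
      rw [hρ]
      exact integrable01 hm1.aestronglyMeasurable (fun p => ⟨pw_nonneg _ _, pw_le_one _ _⟩)
    have hstep1 : ∫ p : ℝ × ℝ, pw p.2 0 ∂((μ'.map X') ⊗ₘ κ)
        = ∫ x, ∫ b, pw b 0 ∂(κ x) ∂(μ'.map X') := Measure.integral_compProd hint1
    have hstep2 : ∫ p : ℝ × ℝ, pw p.2 0 ∂ρ = ∫ u, pw (B u) 0 ∂μ' := by
      rw [hρdef]
      exact integral_map (hX'm.prodMk hBm).aemeasurable hm1.aestronglyMeasurable
    have hstep3 : ∫ y, h₁ y ∂(μ'.map Y') = ∫ u, h₁ (Y' u) ∂μ' :=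
      integral_map hY'm.aemeasurable hh₁m.aestronglyMeasurable
    have hstep4 : ∫ u, pw (B u) 0 ∂μ' = ∫ u, B u ∂μ' :=
      integral_congr_ae (ae_of_all _ fun u => pw_zero (B u) (hh₁01 (Y' u)))
    have hgoal : ∫ x, ∫ g, ψ (x, x + g) ∂γ0 ∂νX = ∫ y, h₁ y ∂νY :=
      calc ∫ x, ∫ g, ψ (x, x + g) ∂γ0 ∂νX = ∫ x, ∫ b, pw b 0 ∂(κ x) ∂νX :=
          integral_congr_ae (ae_of_all _ hper)
      _ = ∫ x, ∫ b, pw b 0 ∂(κ x) ∂(μ'.map X') := by rw [hXmap]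
      _ = ∫ p : ℝ × ℝ, pw p.2 0 ∂((μ'.map X') ⊗ₘ κ) := hstep1.symm
      _ = ∫ p : ℝ × ℝ, pw p.2 0 ∂ρ := by rw [hρ]
      _ = ∫ u, pw (B u) 0 ∂μ' := hstep2
      _ = ∫ u, B u ∂μ' := hstep4
      _ = ∫ y, h₁ y ∂(μ'.map Y') := hstep3.symm
      _ = ∫ y, h₁ y ∂νY := by rw [hYmap]
    exact le_of_eq hgoal
  · -- power
    have hper : ∀ x : ℝ, ∫ g, ψ (x, g) ∂γ0 = ∫ b, pw b x ∂(κ x) := fun x => swap_int (κ x) x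
    have hint2 : Integrable (fun p : ℝ × ℝ => pw p.2 p.1) ((μ'.map X') ⊗ₘ κ) := by
      rw [hρ]
      exact integrable01 hm2.aestronglyMeasurable (fun p => ⟨pw_nonneg _ _, pw_le_one _ _⟩)
    have hstep1 : ∫ p : ℝ × ℝ, pw p.2 p.1 ∂((μ'.map X') ⊗ₘ κ)
        = ∫ x, ∫ b, pw b x ∂(κ x) ∂(μ'.map X') := Measure.integral_compProd hint2
    have hstep2 : ∫ p : ℝ × ℝ, pw p.2 p.1 ∂ρ = ∫ u, pw (B u) (X' u) ∂μ' := by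
      rw [hρdef]
      exact integral_map (hX'm.prodMk hBm).aemeasurable hm2.aestronglyMeasurable
    have hstep3 : ∫ y, pw (h₁ y) y ∂(μ'.map Y') = ∫ u, pw (h₁ (Y' u)) (Y' u) ∂μ' :=
      integral_map hY'm.aemeasurable hm3.aestronglyMeasurable
    have hstepA : ∫ y, h₀ y ∂νY ≤ ∫ y, pw (h₁ y) y ∂νY := by
      refine integral_mono_ae
        (integrable01 hh₀m.aestronglyMeasurable
          (fun y => ⟨integral_nonneg01 fun g => hφ01 _, integral_le_one fun g => hφ01 _⟩))
        (integrable01 hm3.aestronglyMeasurable (fun y => ⟨pw_nonneg _ _, pw_le_one _ _⟩)) ?_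
      filter_upwards [hY0] with y hy
      exact hnp y hy
    have hstepB : ∫ u, pw (h₁ (Y' u)) (Y' u) ∂μ' ≤ ∫ u, pw (B u) (X' u) ∂μ' := by
      refine integral_mono_ae
        (integrable01 hm5.aestronglyMeasurable (fun u => ⟨pw_nonneg _ _, pw_le_one _ _⟩))
        (integrable01 hm4.aestronglyMeasurable (fun u => ⟨pw_nonneg _ _, pw_le_one _ _⟩))
        (ae_of_all _ fun u => pw_mono _ (qf_mono_compare νX νY hst u))
    have hgoal : ∫ y, h₀ y ∂νY ≤ ∫ x, ∫ g, ψ (x, g) ∂γ0 ∂νX :=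
      calc ∫ y, h₀ y ∂νY
          ≤ ∫ y, pw (h₁ y) y ∂νY := hstepA
      _ = ∫ y, pw (h₁ y) y ∂(μ'.map Y') := by rw [hYmap]
      _ = ∫ u, pw (h₁ (Y' u)) (Y' u) ∂μ' := hstep3
      _ ≤ ∫ u, pw (B u) (X' u) ∂μ' := hstepB
      _ = ∫ p : ℝ × ℝ, pw p.2 p.1 ∂ρ := hstep2.symm
      _ = ∫ p : ℝ × ℝ, pw p.2 p.1 ∂((μ'.map X') ⊗ₘ κ) := by rw [hρ]
      _ = ∫ x, ∫ b, pw b x ∂(κ x) ∂(μ'.map X') := hstep1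
      _ = ∫ x, ∫ b, pw b x ∂(κ x) ∂νX := by rw [hXmap]
      _ = ∫ x, ∫ g, ψ (x, g) ∂γ0 ∂νX :=
          (integral_congr_ae (ae_of_all _ hper)).symm
    exact hgoal
/-- rewrite the integral of a test against the joint laws as iterated integrals -/
lemma iter_int {Ω : Type*} [MeasurableSpace Ω] (μ : Measure Ω) [IsProbabilityMeasure μ]
    (Z G : Ω → ℝ) (hZm : Measurable Z) (hGm : Measurable G)
    (hG : μ.map G = gaussianReal 0 1) (hZG : IndepFun Z G μ)
    (ψ : ℝ × ℝ → ℝ) (hψm : Measurable ψ) (hψ01 : ∀ p, ψ p ∈ Icc (0:ℝ) 1) :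
    (∫ p, ψ p ∂(μ.map fun ω => (Z ω, Z ω + G ω))
        = ∫ x, ∫ g, ψ (x, x + g) ∂(gaussianReal 0 1) ∂(μ.map Z)) ∧
    (∫ p, ψ p ∂(μ.map fun ω => (Z ω, G ω))
        = ∫ x, ∫ g, ψ (x, g) ∂(gaussianReal 0 1) ∂(μ.map Z)) := by
  have hQ : μ.map (fun ω => (Z ω, G ω)) = (μ.map Z).prod (gaussianReal 0 1) := by
    rw [← hG]
    exact (indepFun_iff_map_prod_eq_prod_map_map hZm.aemeasurable hGm.aemeasurable).mp hZG
  haveI : IsProbabilityMeasure (μ.map Z) := Measure.isProbabilityMeasure_map hZm.aemeasurable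
  constructor
  · have hP : μ.map (fun ω => (Z ω, Z ω + G ω))
        = (μ.map fun ω => (Z ω, G ω)).map (fun p => (p.1, p.1 + p.2)) := by
      rw [Measure.map_map (measurable_fst.prodMk (measurable_fst.add measurable_snd) :
          Measurable fun p : ℝ × ℝ => (p.1, p.1 + p.2))
        (hZm.prodMk hGm)]
      rfl
    rw [hP, integral_map (measurable_fst.prodMk (measurable_fst.add measurable_snd) :
      Measurable fun p : ℝ × ℝ => (p.1, p.1 + p.2)).aemeasurable
      hψm.aestronglyMeasurable, hQ]
    have hint : Integrable (fun p : ℝ × ℝ => ψ (p.1, p.1 + p.2))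
        ((μ.map Z).prod (gaussianReal 0 1)) :=
      integrable01 ((hψm.comp (measurable_fst.prodMk
        (measurable_fst.add measurable_snd))).aestronglyMeasurable) (fun p => hψ01 _)
    exact integral_prod _ hint
  · rw [hQ]
    exact integral_prod _ (integrable01 hψm.aestronglyMeasurable (fun p => hψ01 _))


end TA
end

/-- If `X ⪰_st Y ≥ 0` (first-order stochastic dominance, `Y` nonnegative), then the tradeoff
functions of the pairs `(X, N(X,1)) ‖ (X, N(0,1))` and `(Y, N(Y,1)) ‖ (Y, N(0,1))` satisfy
`T(X, N(X,1) ‖ X, N(0,1)) ⪯ T(Y, N(Y,1) ‖ Y, N(0,1))` pointwise: a stochastically larger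
shift yields a pointwise smaller (weaker) tradeoff curve. -/
theorem tradeoff_mono_of_stochDom {Ω : Type*} [MeasurableSpace Ω]
    (μ : Measure Ω) [IsProbabilityMeasure μ]
    (X Y G : Ω → ℝ) (hXm : Measurable X) (hYm : Measurable Y) (hGm : Measurable G)
    (hXnn : ∀ᵐ ω ∂μ, 0 ≤ X ω) (hYnn : ∀ᵐ ω ∂μ, 0 ≤ Y ω)
    (hG : μ.map G = gaussianReal 0 1)
    (hXG : IndepFun X G μ) (hYG : IndepFun Y G μ)
    (hst : ∀ t : ℝ, cdf (μ.map X) t ≤ cdf (μ.map Y) t)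
    (α : ℝ) :
    tradeoff (μ.map fun ω => (X ω, X ω + G ω)) (μ.map fun ω => (X ω, G ω)) α ≤
      tradeoff (μ.map fun ω => (Y ω, Y ω + G ω)) (μ.map fun ω => (Y ω, G ω)) α := by
  classical
  set PX := μ.map fun ω => (X ω, X ω + G ω) with hPX
  set QX := μ.map fun ω => (X ω, G ω) with hQX
  set PY := μ.map fun ω => (Y ω, Y ω + G ω) with hPY
  set QY := μ.map fun ω => (Y ω, G ω) with hQY
  haveI : IsProbabilityMeasure PX :=
    Measure.isProbabilityMeasure_map (hXm.prodMk (hXm.add hGm)).aemeasurable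
  haveI : IsProbabilityMeasure QX := Measure.isProbabilityMeasure_map (hXm.prodMk hGm).aemeasurable
  haveI : IsProbabilityMeasure PY :=
    Measure.isProbabilityMeasure_map (hYm.prodMk (hYm.add hGm)).aemeasurable
  haveI : IsProbabilityMeasure QY := Measure.isProbabilityMeasure_map (hYm.prodMk hGm).aemeasurable
  set SX := {r : ℝ | ∃ φ : ℝ × ℝ → ℝ, Measurable φ ∧ (∀ x, φ x ∈ Set.Icc (0 : ℝ) 1) ∧
    (∫ x, φ x ∂PX) ≤ α ∧ r = 1 - ∫ x, φ x ∂QX} with hSX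
  set SY := {r : ℝ | ∃ φ : ℝ × ℝ → ℝ, Measurable φ ∧ (∀ x, φ x ∈ Set.Icc (0 : ℝ) 1) ∧
    (∫ x, φ x ∂PY) ≤ α ∧ r = 1 - ∫ x, φ x ∂QY} with hSY
  have hgoal : tradeoff PX QX α = sInf SX := rfl
  have hgoal' : tradeoff PY QY α = sInf SY := rfl
  rw [hgoal, hgoal']
  have hSXbdd : BddBelow SX := by
    refine ⟨0, fun r hr => ?_⟩
    obtain ⟨φ, hφm, hφ01, hφα, hφr⟩ := hr
    have := TA.integral_le_one (P := QX) hφ01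
    linarith
  haveI : IsProbabilityMeasure (μ.map X) := Measure.isProbabilityMeasure_map hXm.aemeasurable
  haveI : IsProbabilityMeasure (μ.map Y) := Measure.isProbabilityMeasure_map hYm.aemeasurable
  by_cases hα : 0 ≤ α
  · -- SY nonempty; bound inf by inf
    have hSYne : SY.Nonempty := by
      refine ⟨1, 0, measurable_const, fun x => by simp, by simpa using hα, by simp⟩
    refine le_csInf hSYne fun r hr => ?_
    obtain ⟨φ, hφm, hφ01, hφα, hφr⟩ := hr
    have hY0 : ∀ᵐ y ∂(μ.map Y), 0 ≤ y := by
      rw [ae_map_iff hYm.aemeasurable measurableSet_Ici]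
      exact hYnn
    obtain ⟨ψ, hψm, hψ01, hsize, hpower⟩ := TA.key (μ.map X) (μ.map Y) hY0 hst φ hφm hφ01
    obtain ⟨hX1, hX2⟩ := TA.iter_int μ X G hXm hGm hG hXG ψ hψm hψ01
    obtain ⟨hY1, hY2⟩ := TA.iter_int μ Y G hYm hGm hG hYG φ hφm hφ01
    have hmem : (1 - ∫ p, ψ p ∂QX) ∈ SX := by
      refine ⟨ψ, hψm, hψ01, ?_, rfl⟩
      rw [hX1]
      calc ∫ x, ∫ g, ψ (x, x + g) ∂(gaussianReal 0 1) ∂(μ.map X)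
          ≤ ∫ y, ∫ g, φ (y, y + g) ∂(gaussianReal 0 1) ∂(μ.map Y) := hsize
        _ = ∫ p, φ p ∂PY := hY1.symm
        _ ≤ α := hφα
    have hle : (1 - ∫ p, ψ p ∂QX) ≤ r := by
      rw [hφr]
      have : ∫ p, φ p ∂QY ≤ ∫ p, ψ p ∂QX := by
        rw [hX2, hY2]
        exact hpower
      linarith
    exact le_trans (csInf_le hSXbdd hmem) hle
  · -- both sets empty
    have hX : SX = ∅ := by
      ext r
      simp only [hSX, mem_setOf_eq, mem_empty_iff_false, iff_false, not_exists]
      intro φ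
      rintro ⟨hφm, hφ01, hφα, -⟩
      have := TA.integral_nonneg01 (P := PX) hφ01
      exact hα (le_trans this hφα)
    have hY : SY = ∅ := by
      ext r
      simp only [hSY, mem_setOf_eq, mem_empty_iff_false, iff_false, not_exists]
      intro φ
      rintro ⟨hφm, hφ01, hφα, -⟩
      have := TA.integral_nonneg01 (P := PY) hφ01
      exact hα (le_trans this hφα)
    rw [hX, hY]
end

section
/- For a distribution on ℝ with log-concave density f, the survival function S = 1 − F is log-concave, the hazard rate h = f/S is nondecreasing on the support (IFR), and the mean residual life m(t) = E[X − t | X > t] is nonincreasing (DMRL). -/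
open MeasureTheory

/-- `f` is log-concave: `f(θx + (1−θ)y) ≥ f(x)^θ f(y)^{1−θ}` for all `x, y`, `θ ∈ [0,1]`. -/
def LogConcaveFn (f : ℝ → ℝ) : Prop :=
  ∀ x y θ : ℝ, 0 ≤ θ → θ ≤ 1 → f x ^ θ * f y ^ (1 - θ) ≤ f (θ * x + (1 - θ) * y)

/-- Four-point inequality for a log-concave nonnegative function:
if `a ≤ b, c ≤ d` and `a + d = b + c` then `f a * f d ≤ f b * f c`. -/
lemma fourpoint {f : ℝ → ℝ} (hfnn : ∀ x, 0 ≤ f x) (hlc : LogConcaveFn f)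
    {a b c d : ℝ} (hab : a ≤ b) (hac : a ≤ c) (hbd : b ≤ d) (hcd : c ≤ d)
    (hsum : a + d = b + c) : f a * f d ≤ f b * f c := by
  rcases eq_or_lt_of_le (hab.trans hbd) with h | had
  · have hb : b = a := le_antisymm (by linarith) hab
    have hc : c = a := le_antisymm (by linarith) hac
    rw [hb, hc, ← h]
  · by_cases ha : f a = 0
    · rw [ha, zero_mul]; exact mul_nonneg (hfnn b) (hfnn c)
    by_cases hd : f d = 0
    · rw [hd, mul_zero]; exact mul_nonneg (hfnn b) (hfnn c)
    have hfa : 0 < f a := (hfnn a).lt_of_ne (Ne.symm ha)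
    have hfd : 0 < f d := (hfnn d).lt_of_ne (Ne.symm hd)
    set θ : ℝ := (d - b) / (d - a) with hθ
    have hda : (0:ℝ) < d - a := by linarith
    have hθ0 : 0 ≤ θ := div_nonneg (by linarith) hda.le
    have hθ1 : θ ≤ 1 := by
      rw [div_le_one hda]; linarith
    have hmul : θ * (d - a) = d - b := div_mul_cancel₀ _ hda.ne'
    have e1 : θ * a + (1 - θ) * d = b := by nlinarith [hmul]
    have e2 : (1 - θ) * a + (1 - (1 - θ)) * d = c := by nlinarith [hmul]
    have h1 := hlc a d θ hθ0 hθ1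
    have h2 := hlc a d (1 - θ) (by linarith) (by linarith)
    rw [e1] at h1
    rw [e2] at h2
    have h3 : (1 : ℝ) - (1 - θ) = θ := by ring
    rw [h3] at h2
    have ea : f a ^ θ * f a ^ (1 - θ) = f a := by
      rw [← Real.rpow_add hfa]; norm_num
    have ed : f d ^ (1 - θ) * f d ^ θ = f d := by
      rw [← Real.rpow_add hfd]; norm_num
    calc f a * f d = (f a ^ θ * f d ^ (1 - θ)) * (f a ^ (1 - θ) * f d ^ θ) := by
          rw [show (f a ^ θ * f d ^ (1 - θ)) * (f a ^ (1 - θ) * f d ^ θ)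
              = (f a ^ θ * f a ^ (1 - θ)) * (f d ^ (1 - θ) * f d ^ θ) by ring, ea, ed]
      _ ≤ f b * f c := mul_le_mul h1 h2
          (mul_nonneg (Real.rpow_nonneg (hfnn a) _) (Real.rpow_nonneg (hfnn d) _))
          (hfnn b)

/-- Translation invariance of integrals over `Ioi`. -/
lemma integral_Ioi_comp_add (g : ℝ → ℝ) (a c : ℝ) :
    ∫ x in Set.Ioi a, g (x + c) = ∫ x in Set.Ioi (a + c), g x := by
  rw [← integral_indicator measurableSet_Ioi, ← integral_indicator measurableSet_Ioi]
  have : ∀ x, (Set.Ioi a).indicator (fun x => g (x + c)) x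
      = (Set.Ioi (a + c)).indicator g (x + c) := by
    intro x
    by_cases h : x ∈ Set.Ioi a
    · rw [Set.indicator_of_mem h, Set.indicator_of_mem (by simpa using h)]
    · rw [Set.indicator_of_notMem h, Set.indicator_of_notMem]
      simp only [Set.mem_Ioi] at h ⊢
      linarith
  simp_rw [this]
  exact integral_add_right_eq_self ((Set.Ioi (a + c)).indicator g) c

/-- Translation invariance of integrals over `Ioc`. -/
lemma integral_Ioc_comp_add (g : ℝ → ℝ) (a b c : ℝ) :
    ∫ x in Set.Ioc a b, g (x + c) = ∫ x in Set.Ioc (a + c) (b + c), g x := by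
  rw [← integral_indicator measurableSet_Ioc, ← integral_indicator measurableSet_Ioc]
  have : ∀ x, (Set.Ioc a b).indicator (fun x => g (x + c)) x
      = (Set.Ioc (a + c) (b + c)).indicator g (x + c) := by
    intro x
    by_cases h : x ∈ Set.Ioc a b
    · rw [Set.indicator_of_mem h, Set.indicator_of_mem]
      simp only [Set.mem_Ioc] at h ⊢
      constructor <;> linarith [h.1, h.2]
    · rw [Set.indicator_of_notMem h, Set.indicator_of_notMem]
      simp only [Set.mem_Ioc, not_and_or, not_le, not_lt] at h ⊢
      rcases h with h | h
      · left; linarith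
      · right; linarith
  simp_rw [this]
  exact integral_add_right_eq_self ((Set.Ioc (a + c) (b + c)).indicator g) c

lemma splitS {f : ℝ → ℝ} (hint : Integrable f) {s t : ℝ} (hst : s ≤ t) :
    ∫ x in Set.Ioi s, f x = (∫ x in Set.Ioc s t, f x) + ∫ x in Set.Ioi t, f x := by
  rw [← Set.Ioc_union_Ioi_eq_Ioi hst]
  exact setIntegral_union (Set.Ioc_disjoint_Ioi le_rfl) measurableSet_Ioi
    hint.integrableOn hint.integrableOn

/-- The key "four-point" inequality for the survival function. -/
lemma keyS {f : ℝ → ℝ} (hfnn : ∀ x, 0 ≤ f x) (hfm : Measurable f)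
    (hint : Integrable f) (hlc : LogConcaveFn f) {s t u : ℝ} (hst : s ≤ t) (hu : 0 ≤ u) :
    (∫ x in Set.Ioi s, f x) * (∫ x in Set.Ioi (t + u), f x) ≤
      (∫ x in Set.Ioi t, f x) * (∫ x in Set.Ioi (s + u), f x) := by
  have e1 := splitS hint hst
  have e2 := splitS hint (show s + u ≤ t + u by linarith)
  have hA : MeasurableSet (Set.Ioi (t + u)) := measurableSet_Ioi
  have hB : MeasurableSet (Set.Ioc s t) := measurableSet_Ioc
  have intL : Integrable (fun x : ℝ => f (x - u)) volume := hint.comp_sub_right u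
  have intR : Integrable (fun x : ℝ => f (x + u)) volume := hint.comp_add_right u
  have prodL : (∫ x in Set.Ioi (t + u), f x) * (∫ y in Set.Ioc s t, f y)
      = ∫ p in (Set.Ioi (t + u)) ×ˢ (Set.Ioc s t), f p.1 * f p.2 ∂(volume.prod volume) := by
    rw [← Measure.prod_restrict, integral_prod_mul]
  have prodR : (∫ x in Set.Ioi (t + u), f (x - u)) * (∫ y in Set.Ioc s t, f (y + u))
      = ∫ p in (Set.Ioi (t + u)) ×ˢ (Set.Ioc s t), f (p.1 - u) * f (p.2 + u)
        ∂(volume.prod volume) := by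
    rw [← Measure.prod_restrict]
    exact (integral_prod_mul (fun x => f (x - u)) (fun y => f (y + u))).symm
  have hmono : ∫ p in (Set.Ioi (t + u)) ×ˢ (Set.Ioc s t), f p.1 * f p.2 ∂(volume.prod volume)
      ≤ ∫ p in (Set.Ioi (t + u)) ×ˢ (Set.Ioc s t), f (p.1 - u) * f (p.2 + u)
        ∂(volume.prod volume) := by
    apply integral_mono_of_nonneg
    · exact Filter.Eventually.of_forall fun p => mul_nonneg (hfnn _) (hfnn _)
    · rw [← Measure.prod_restrict]
      exact (intL.restrict).mul_prod (intR.restrict)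
    · refine ae_restrict_of_forall_mem (hA.prod hB) fun p hp => ?_
      obtain ⟨hp1, hp2⟩ := hp
      simp only [Set.mem_Ioi] at hp1
      simp only [Set.mem_Ioc] at hp2
      have := fourpoint hfnn hlc (a := p.2) (b := p.2 + u) (c := p.1 - u) (d := p.1)
        (by linarith) (by linarith [hp2.2]) (by linarith [hp2.2]) (by linarith)
        (by ring)
      calc f p.1 * f p.2 = f p.2 * f p.1 := mul_comm _ _
        _ ≤ f (p.2 + u) * f (p.1 - u) := this
        _ = f (p.1 - u) * f (p.2 + u) := mul_comm _ _
  have tL : ∫ x in Set.Ioi (t + u), f (x - u) = ∫ x in Set.Ioi t, f x := by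
    have := integral_Ioi_comp_add (fun x => f x) (t + u) (-u)
    simp only [← sub_eq_add_neg] at this
    rw [this]; congr 1; ring_nf
  have tR : ∫ y in Set.Ioc s t, f (y + u) = ∫ y in Set.Ioc (s + u) (t + u), f y :=
    integral_Ioc_comp_add (fun x => f x) s t u
  have claim3 : (∫ x in Set.Ioi (t + u), f x) * (∫ y in Set.Ioc s t, f y)
      ≤ (∫ x in Set.Ioi t, f x) * (∫ y in Set.Ioc (s + u) (t + u), f y) := by
    rw [prodL, ← tL, ← tR, prodR]; exact hmono
  rw [e1, e2]
  nlinarith [claim3]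

lemma survival_continuous {f : ℝ → ℝ} (hint : Integrable f) :
    Continuous (fun t => ∫ x in Set.Ioi t, f x) := by
  have heq : (fun t => ∫ x in Set.Ioi t, f x)
      = fun t => (∫ x in Set.Ioi (0:ℝ), f x) - ∫ x in (0:ℝ)..t, f x := by
    funext t
    rcases le_total (0:ℝ) t with h | h
    · have h1 := splitS hint h
      rw [intervalIntegral.integral_of_le h]; linarith
    · have h1 := splitS hint h
      rw [intervalIntegral.integral_of_ge h]; linarith
  rw [heq]
  exact continuous_const.sub
    (intervalIntegral.continuous_primitive (fun a b => hint.intervalIntegrable) 0)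

/-- A closed subset of `ℝ` containing `0` and `1` and closed under midpoints
contains all of `[0,1]`. -/
lemma icc_subset_of_closed_midpoint {C : Set ℝ} (hC : IsClosed C)
    (h0 : (0:ℝ) ∈ C) (h1 : (1:ℝ) ∈ C)
    (hmid : ∀ a ∈ C, ∀ b ∈ C, (a + b) / 2 ∈ C) :
    Set.Icc (0:ℝ) 1 ⊆ C := by
  intro θ hθ
  obtain ⟨hθ0, hθ1⟩ := hθ
  set A := C ∩ Set.Icc 0 θ with hA
  set B := C ∩ Set.Icc θ 1 with hB
  have hAne : A.Nonempty := ⟨0, h0, le_refl 0, hθ0⟩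
  have hBne : B.Nonempty := ⟨1, h1, hθ1, le_refl 1⟩
  have hAcl : IsClosed A := hC.inter isClosed_Icc
  have hBcl : IsClosed B := hC.inter isClosed_Icc
  have hAbdd : BddAbove A := ⟨θ, fun x hx => hx.2.2⟩
  have hBbdd : BddBelow B := ⟨θ, fun x hx => hx.2.1⟩
  have haA : sSup A ∈ A := hAcl.csSup_mem hAne hAbdd
  have hbB : sInf B ∈ B := hBcl.csInf_mem hBne hBbdd
  set a := sSup A
  set b := sInf B
  have haθ : a ≤ θ := haA.2.2
  have hθb : θ ≤ b := hbB.2.1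
  rcases eq_or_lt_of_le (haθ.trans hθb) with h | h
  · have : a = θ := le_antisymm haθ (by linarith)
    rw [← this]; exact haA.1
  · exfalso
    have hm := hmid a haA.1 b hbB.1
    rcases le_total ((a + b) / 2) θ with hle | hle
    · have hmem : (a + b) / 2 ∈ A := ⟨hm, ⟨le_trans haA.2.1 (by linarith), hle⟩⟩
      have := le_csSup hAbdd hmem
      linarith
    · have hmem : (a + b) / 2 ∈ B := ⟨hm, ⟨hle, le_trans (by linarith) hbB.2.2⟩⟩
      have := csInf_le hBbdd hmem
      linarith

lemma survival_logconcave {f : ℝ → ℝ} (hfnn : ∀ x, 0 ≤ f x) (hfm : Measurable f)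
    (hint : Integrable f) (hlc : LogConcaveFn f) :
    LogConcaveFn (fun t => ∫ u in Set.Ioi t, f u) := by
  set S : ℝ → ℝ := fun t => ∫ u in Set.Ioi t, f u with hSdef
  have hSnn : ∀ t, 0 ≤ S t := fun t => setIntegral_nonneg measurableSet_Ioi fun u _ => hfnn u
  have hSc : Continuous S := survival_continuous hint
  have hmidkey : ∀ p q : ℝ, p ≤ q → S p * S q ≤ S ((p + q) / 2) * S ((p + q) / 2) := by
    intro p q hpq
    have := keyS hfnn hfm hint hlc (s := p) (t := (p + q) / 2) (u := (q - p) / 2)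
      (by linarith) (by linarith)
    rw [show (p + q) / 2 + (q - p) / 2 = q by ring, show p + (q - p) / 2 = (p + q) / 2 by ring]
      at this
    exact this
  intro x y θ hθ0 hθ1
  rcases eq_or_lt_of_le hθ0 with h0 | hθpos
  · rw [← h0]; norm_num
  rcases eq_or_lt_of_le hθ1 with h1 | hθlt
  · rw [h1]; norm_num
  by_cases hx : S x = 0
  · rw [hx, Real.zero_rpow (ne_of_gt hθpos), zero_mul]; exact hSnn _
  by_cases hy : S y = 0
  · rw [hy, Real.zero_rpow (by intro h; linarith : (1:ℝ) - θ ≠ 0), mul_zero]; exact hSnn _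
  have hSx : 0 < S x := (hSnn x).lt_of_ne (Ne.symm hx)
  have hSy : 0 < S y := (hSnn y).lt_of_ne (Ne.symm hy)
  set C : Set ℝ := {σ : ℝ | σ ∈ Set.Icc (0:ℝ) 1 ∧
    S x ^ σ * S y ^ (1 - σ) ≤ S (σ * x + (1 - σ) * y)} with hCdef
  suffices hsub : Set.Icc (0:ℝ) 1 ⊆ C by exact (hsub ⟨hθ0, hθ1⟩).2
  apply icc_subset_of_closed_midpoint
  · have hceq : C = Set.Icc (0:ℝ) 1 ∩
        {σ : ℝ | S x ^ σ * S y ^ (1 - σ) ≤ S (σ * x + (1 - σ) * y)} := rfl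
    rw [hceq]
    apply isClosed_Icc.inter
    have hgc : Continuous fun σ : ℝ => S x ^ σ * S y ^ (1 - σ) := by
      have he : (fun σ : ℝ => S x ^ σ * S y ^ (1 - σ))
          = fun σ => Real.exp (Real.log (S x) * σ) * Real.exp (Real.log (S y) * (1 - σ)) := by
        funext σ; rw [Real.rpow_def_of_pos hSx, Real.rpow_def_of_pos hSy]
      rw [he]
      exact (Real.continuous_exp.comp (continuous_const.mul continuous_id)).mul
        (Real.continuous_exp.comp (continuous_const.mul (continuous_const.sub continuous_id)))
    have hhc : Continuous fun σ : ℝ => S (σ * x + (1 - σ) * y) := by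
      exact hSc.comp ((continuous_id.mul continuous_const).add
        ((continuous_const.sub continuous_id).mul continuous_const))
    exact isClosed_le hgc hhc
  · exact ⟨⟨le_refl 0, zero_le_one⟩, by norm_num⟩
  · exact ⟨⟨zero_le_one, le_refl 1⟩, by norm_num⟩
  · rintro σ ⟨⟨hσ0, hσ1⟩, hσin⟩ τ ⟨⟨hτ0, hτ1⟩, hτin⟩
    refine ⟨⟨by linarith, by linarith⟩, ?_⟩
    set m : ℝ := (σ + τ) / 2 with hmdef
    set pσ : ℝ := σ * x + (1 - σ) * y with hpσ
    set pτ : ℝ := τ * x + (1 - τ) * y with hpτ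
    have hpm : m * x + (1 - m) * y = (pσ + pτ) / 2 := by rw [hpσ, hpτ, hmdef]; ring
    have hkey : S pσ * S pτ ≤ S (m * x + (1 - m) * y) * S (m * x + (1 - m) * y) := by
      rcases le_total pσ pτ with h | h
      · rw [hpm]; exact hmidkey _ _ h
      · rw [hpm, show (pσ + pτ) / 2 = (pτ + pσ) / 2 by ring]
        calc S pσ * S pτ = S pτ * S pσ := mul_comm _ _
          _ ≤ _ := hmidkey _ _ h
    have ex : S x ^ m * S x ^ m = S x ^ σ * S x ^ τ := by
      rw [← Real.rpow_add hSx, ← Real.rpow_add hSx]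
      congr 1; rw [hmdef]; ring
    have ey : S y ^ (1 - m) * S y ^ (1 - m) = S y ^ (1 - σ) * S y ^ (1 - τ) := by
      rw [← Real.rpow_add hSy, ← Real.rpow_add hSy]
      congr 1; rw [hmdef]; ring
    have hsq : (S x ^ m * S y ^ (1 - m)) * (S x ^ m * S y ^ (1 - m))
        ≤ S (m * x + (1 - m) * y) * S (m * x + (1 - m) * y) := by
      have e : (S x ^ m * S y ^ (1 - m)) * (S x ^ m * S y ^ (1 - m))
          = (S x ^ σ * S y ^ (1 - σ)) * (S x ^ τ * S y ^ (1 - τ)) := by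
        rw [show (S x ^ m * S y ^ (1 - m)) * (S x ^ m * S y ^ (1 - m))
            = (S x ^ m * S x ^ m) * (S y ^ (1 - m) * S y ^ (1 - m)) by ring, ex, ey]
        ring
      rw [e]
      calc (S x ^ σ * S y ^ (1 - σ)) * (S x ^ τ * S y ^ (1 - τ)) ≤ S pσ * S pτ := by
            apply mul_le_mul hσin hτin
              (mul_nonneg (Real.rpow_nonneg (hSnn x) _) (Real.rpow_nonneg (hSnn y) _))
              (hSnn _)
        _ ≤ _ := hkey
    refine le_of_pow_le_pow_left₀ (by norm_num) (hSnn _) (n := 2) ?_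
    rw [pow_two, pow_two]
    exact hsq

lemma IFR_aux {f : ℝ → ℝ} (hfnn : ∀ x, 0 ≤ f x) (hint : Integrable f)
    (hlc : LogConcaveFn f) {s t : ℝ} (hst : s ≤ t)
    (hs : 0 < ∫ u in Set.Ioi s, f u) (ht : 0 < ∫ u in Set.Ioi t, f u) :
    f s / (∫ u in Set.Ioi s, f u) ≤ f t / (∫ u in Set.Ioi t, f u) := by
  rw [div_le_div_iff₀ hs ht]
  have trans : (∫ u in Set.Ioi t, f u) = ∫ x in Set.Ioi s, f (x + (t - s)) := by
    rw [integral_Ioi_comp_add f s (t - s), show s + (t - s) = t by ring]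
  have e1 : f s * (∫ u in Set.Ioi t, f u) = ∫ x in Set.Ioi s, f s * f (x + (t - s)) := by
    rw [trans]; exact (integral_const_mul _ _).symm
  have e2 : f t * (∫ u in Set.Ioi s, f u) = ∫ x in Set.Ioi s, f t * f x :=
    (integral_const_mul _ _).symm
  rw [e1, e2]
  apply integral_mono_of_nonneg
  · exact Filter.Eventually.of_forall fun x => mul_nonneg (hfnn _) (hfnn _)
  · exact (hint.integrableOn).const_mul _
  · refine ae_restrict_of_forall_mem measurableSet_Ioi fun x hx => ?_
    have hx' : s < x := hx
    exact fourpoint hfnn hlc (a := s) (b := t) (c := x) (d := x + (t - s))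
      hst hx'.le (by linarith) (by linarith) (by ring)

lemma DMRL_aux {S : ℝ → ℝ} (hSnn : ∀ v, 0 ≤ S v) (hSm : Measurable S)
    {B : ℝ} (hSbd : ∀ v, S v ≤ B)
    (hkey : ∀ s t u : ℝ, s ≤ t → 0 ≤ u → S s * S (t + u) ≤ S t * S (s + u))
    {s t : ℝ} (hst : s ≤ t) (hs : 0 < S s) (ht : 0 < S t) :
    (∫ v in Set.Ioi t, S v) / S t ≤ (∫ v in Set.Ioi s, S v) / S s := by
  by_cases hM : IntegrableOn S (Set.Ioi s)
  · rw [div_le_div_iff₀ ht hs]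
    have trans : (∫ v in Set.Ioi t, S v) = ∫ w in Set.Ioi s, S (w + (t - s)) := by
      rw [integral_Ioi_comp_add S s (t - s), show s + (t - s) = t by ring]
    have e1 : (∫ v in Set.Ioi t, S v) * S s = ∫ w in Set.Ioi s, S (w + (t - s)) * S s := by
      rw [trans]; exact (integral_mul_const _ _).symm
    have e2 : (∫ v in Set.Ioi s, S v) * S t = ∫ w in Set.Ioi s, S w * S t :=
      (integral_mul_const _ _).symm
    rw [e1, e2]
    apply integral_mono_of_nonneg
    · exact Filter.Eventually.of_forall fun w => mul_nonneg (hSnn _) (hSnn _)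
    · exact hM.mul_const _
    · refine ae_restrict_of_forall_mem measurableSet_Ioi fun w hw => ?_
      have hw' : s < w := hw
      have hk := hkey s w (t - s) hw'.le (by linarith)
      rw [show s + (t - s) = t by ring] at hk
      calc S (w + (t - s)) * S s = S s * S (w + (t - s)) := mul_comm _ _
        _ ≤ S w * S t := hk
  · have hSIoc : IntegrableOn S (Set.Ioc s t) := by
      apply Integrable.mono' (integrable_const B) hSm.aestronglyMeasurable.restrict
      refine Filter.Eventually.of_forall fun v => ?_
      rw [Real.norm_eq_abs, abs_of_nonneg (hSnn v)]
      exact hSbd v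
    have hMt : ¬ IntegrableOn S (Set.Ioi t) := by
      intro h
      apply hM
      rw [show Set.Ioi s = Set.Ioc s t ∪ Set.Ioi t from (Set.Ioc_union_Ioi_eq_Ioi hst).symm]
      exact hSIoc.union h
    rw [integral_undef hM, integral_undef hMt, zero_div, zero_div]

/-- For a distribution on `ℝ` with log-concave density `f`:
the survival function `S(t) = ∫_t^∞ f` is log-concave, the hazard rate `h = f/S` is
nondecreasing on the support `{S > 0}` (IFR), and the mean residual life
`m(t) = (∫_t^∞ S)/S(t)` is nonincreasing on `{S > 0}` (DMRL). -/
theorem logConcave_density_survival_IFR_DMRL (f : ℝ → ℝ)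
    (hfnn : ∀ x, 0 ≤ f x) (hfm : Measurable f)
    (hprob : ∫ x, f x = 1)
    (hlc : LogConcaveFn f) :
    (LogConcaveFn fun t => ∫ u in Set.Ioi t, f u) ∧
    (∀ s t : ℝ, s ≤ t →
      0 < (∫ u in Set.Ioi s, f u) → 0 < (∫ u in Set.Ioi t, f u) →
      f s / (∫ u in Set.Ioi s, f u) ≤ f t / (∫ u in Set.Ioi t, f u)) ∧
    (∀ s t : ℝ, s ≤ t →
      0 < (∫ u in Set.Ioi s, f u) → 0 < (∫ u in Set.Ioi t, f u) →
      (∫ v in Set.Ioi t, (∫ u in Set.Ioi v, f u)) / (∫ u in Set.Ioi t, f u) ≤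
        (∫ v in Set.Ioi s, (∫ u in Set.Ioi v, f u)) / (∫ u in Set.Ioi s, f u)) := by
  have hint : Integrable f := by
    by_contra h
    rw [integral_undef h] at hprob
    norm_num at hprob
  have hSnn : ∀ v : ℝ, 0 ≤ ∫ u in Set.Ioi v, f u :=
    fun v => setIntegral_nonneg measurableSet_Ioi fun u _ => hfnn u
  have hSanti : Antitone (fun v : ℝ => ∫ u in Set.Ioi v, f u) := fun a b hab =>
    setIntegral_mono_set hint.integrableOn
      (Filter.Eventually.of_forall hfnn)
      ((Set.Ioi_subset_Ioi hab).eventuallyLE)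
  have hSbd : ∀ v : ℝ, (∫ u in Set.Ioi v, f u) ≤ 1 := fun v => by
    rw [← hprob]
    exact setIntegral_le_integral hint (Filter.Eventually.of_forall hfnn)
  refine ⟨survival_logconcave hfnn hfm hint hlc, ?_, ?_⟩
  · intro s t hst hs ht
    exact IFR_aux hfnn hint hlc hst hs ht
  · intro s t hst hs ht
    exact DMRL_aux hSnn hSanti.measurable hSbd
      (fun s t u hst hu => keyS hfnn hfm hint hlc hst hu) hst hs ht
end
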